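/- The L_NFU-sentence (∀n∈ℕ)(∀m∈ℕ)((T(n)=n ∧ m ≤ n) → T(m)=m) holds in every model of NFU^{-AC} ∪ {AxCount_≥}; that is, in any such model the set of internal natural numbers fixed by T is downward closed. -/
import Mathlib


open FirstOrder Language

namespace NFUweak

/-! ## The language L_NFU -/

/-- Function symbols of `L_NFU`: a single binary (type-level) pairing function. -/
inductive NFUFunc : ℕ → Type
  | pair : NFUFunc 2

/-- Relation symbols of `L_NFU`: binary membership `∈` and unary sethood `S`. -/
inductive NFURel : ℕ → Type
  | mem : NFURel 2
  | isSet : NFURel 1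

/-- The language `L_NFU`. -/
def LNFU : Language := ⟨NFUFunc, NFURel⟩

/-- The membership relation symbol. -/
def memR : LNFU.Relations 2 := NFURel.mem

/-- The sethood relation symbol. -/
def setR : LNFU.Relations 1 := NFURel.isSet

/-- The pairing function symbol. -/
def pairF : LNFU.Functions 2 := NFUFunc.pair

/-! ## Stratification -/

/-- `termLevel σ t k` says that, relative to the assignment `σ` of levels (types)
to variables, the term `t` (and all of its subterms) receives level `k`. -/
def termLevel {α : Type} (σ : α → ℕ) : LNFU.Term α → ℕ → Prop
  | Term.var v, k => σ v = k
  | Term.func _ ts, k => ∀ i, termLevel σ (ts i) k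

/-- The stratification condition on an atomic formula `R(ts)`:
for `s ∈ t` the level of `t` is one more than that of `s`; `S(t)` imposes only
that `t` has a well-defined level. -/
def atomOK {α : Type} (σ : α → ℕ) : ∀ {l : ℕ}, LNFU.Relations l → (Fin l → LNFU.Term α) → Prop
  | _, NFURel.mem, ts => ∃ k, termLevel σ (ts 0) k ∧ termLevel σ (ts 1) (k + 1)
  | _, NFURel.isSet, ts => ∃ k, termLevel σ (ts 0) k

/-- `stratifiedFrom σ φ` : the formula `φ` is stratified, where the free
variables receive the levels given by `σ` (each quantified variable may receive
any level). -/
def stratifiedFrom : ∀ {n : ℕ}, ((Empty ⊕ Fin n) → ℕ) → LNFU.BoundedFormula Empty n → Prop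
  | _, _, BoundedFormula.falsum => True
  | _, σ, BoundedFormula.equal t s => ∃ k, termLevel σ t k ∧ termLevel σ s k
  | _, σ, BoundedFormula.rel R ts => atomOK σ R ts
  | _, σ, BoundedFormula.imp f g => stratifiedFrom σ f ∧ stratifiedFrom σ g
  | _, σ, BoundedFormula.all f =>
      ∃ k, stratifiedFrom
        (Sum.elim (fun e => σ (Sum.inl e)) (Fin.snoc (fun i => σ (Sum.inr i)) k)) f

/-- A formula of `L_NFU` is stratified if some assignment of levels to its
variables witnesses the stratification conditions. -/
def IsStratified {n : ℕ} (φ : LNFU.BoundedFormula Empty n) : Prop :=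
  ∃ σ, stratifiedFrom σ φ

/-! ## The axioms of NFU⁻ᴬᶜ -/

/-- Weak extensionality: sets with the same members are equal. -/
def weakExtAx : LNFU.Sentence :=
  ∀' ∀' ((setR.boundedFormula₁ &0 ⊓
          setR.boundedFormula₁ &1) ⟹
    (Term.bdEqual &0 &1 ⇔
      ∀' (memR.boundedFormula₂ &2 &0 ⇔
          memR.boundedFormula₂ &2 &1)))

/-- The pairing axiom: `⟨x,y⟩ = ⟨w,z⟩ → x = w ∧ y = z`. -/
def pairingAx : LNFU.Sentence :=
  ∀' ∀' ∀' ∀' (Term.bdEqual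
      (pairF.apply₂ &0 &1)
      (pairF.apply₂ &2 &3) ⟹
    (Term.bdEqual &0 &2 ⊓ Term.bdEqual &1 &3))

/-- The comprehension axiom for a formula `φ(x, z₀, …, z_{m-1})`, where the
variable `x` is (de Bruijn) variable `m` of `φ` and `z₀, …, z_{m-1}` are the
parameters: `∀ z⃗ ∃ y (S(y) ∧ ∀ x (x ∈ y ↔ φ(x, z⃗)))`. -/
def comprehensionAx (m : ℕ) (φ : LNFU.BoundedFormula Empty (m + 1)) : LNFU.Sentence :=
  BoundedFormula.alls (∃'
    (setR.boundedFormula₁ (Term.var (Sum.inr ⟨m, by omega⟩)) ⊓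
      ∀' (memR.boundedFormula₂
            (Term.var (Sum.inr ⟨m + 1, by omega⟩)) (Term.var (Sum.inr ⟨m, by omega⟩)) ⇔
          φ.liftAt 1 m)))

/-- The theory NFU⁻ᴬᶜ : weak extensionality, pairing and stratified comprehension. -/
def NFUmAC : LNFU.Theory :=
  {weakExtAx, pairingAx} ∪
    {s | ∃ (m : ℕ) (φ : LNFU.BoundedFormula Empty (m + 1)),
      IsStratified φ ∧ s = comprehensionAx m φ}

/-- The axiom `∀x S(x)` ("everything is a set"), turning NFU⁻ᴬᶜ into NF. -/
def allSetAx : LNFU.Sentence :=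
  ∀' (setR.boundedFormula₁ &0)

/-- The theory NF. -/
def NF : LNFU.Theory := NFUmAC ∪ {allSetAx}

end NFUweak
namespace NFUweak

/-! ## Semantic notions inside a model of NFU⁻ᴬᶜ -/

section Semantics

variable {M : Type} [LNFU.Structure M]

/-- The membership relation of the model. -/
def smem (x y : M) : Prop := Structure.RelMap memR ![x, y]

/-- The sethood predicate of the model. -/
def sset (x : M) : Prop := Structure.RelMap setR ![x]

/-- The (type-level) pairing function of the model. -/
def spair (x y : M) : M := Structure.funMap pairF ![x, y]

/-- `s` is the singleton `{x}`. -/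
def isSingletonOf (s x : M) : Prop := sset s ∧ ∀ z, smem z s ↔ z = x

/-- `e` is the empty set. -/
def isEmptySet (e : M) : Prop := sset e ∧ ∀ z, ¬ smem z e

/-- `v` is the universal set `V`. -/
def isUniverseOf (v : M) : Prop := sset v ∧ ∀ x, smem x v

/-- `f` is an internal function from (the members of) `X` to `Y`, coded as a set of
type-level ordered pairs `⟨a, b⟩`. -/
def isFunc (f X Y : M) : Prop :=
  sset f ∧ (∀ p, smem p f → ∃ a b, p = spair a b ∧ smem a X ∧ smem b Y) ∧
    (∀ a, smem a X → ∃ b, smem (spair a b) f) ∧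
    (∀ a b b', smem (spair a b) f → smem (spair a b') f → b = b')

/-- `f` is an internal injection from `X` into `Y`. -/
def isInjFunc (f X Y : M) : Prop :=
  isFunc f X Y ∧ ∀ a a' b, smem (spair a b) f → smem (spair a' b) f → a = a'

/-- `f` is an internal bijection between `X` and `Y`. -/
def isBijFunc (f X Y : M) : Prop :=
  isInjFunc f X Y ∧ ∀ b, smem b Y → ∃ a, smem (spair a b) f

/-- `X` and `Y` are equipollent (internally). -/
def equipollent (X Y : M) : Prop := ∃ f, isBijFunc f X Y

/-- `c` is the cardinal `|X|`, i.e. the equivalence class of `X` under equipollence. -/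
def isCardOf (c X : M) : Prop := sset c ∧ ∀ y, smem y c ↔ equipollent y X

/-- `c` is a cardinal. -/
def isCardinal (c : M) : Prop := ∃ X, sset X ∧ isCardOf c X

/-- `κ ≤ μ` for cardinals: some member of `κ` injects into some member of `μ`. -/
def cardLe (κ μ : M) : Prop := ∃ X Y f, smem X κ ∧ smem Y μ ∧ isInjFunc f X Y

/-- `Y = ι``X` is the set of singletons of members of `X`. -/
def isIotaImageOf (Y X : M) : Prop :=
  sset Y ∧ ∀ z, smem z Y ↔ ∃ x, smem x X ∧ isSingletonOf z x

/-- `t = T(c)` for a cardinal `c`:  `T(|X|) = |ι``X|`. -/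
def isTOf (t c : M) : Prop :=
  ∃ X Y, smem X c ∧ isIotaImageOf Y X ∧ isCardOf t Y

/-- `t = T⁴(c)`. -/
def isT4Of (t c : M) : Prop :=
  ∃ t₁ t₂ t₃, isTOf t₁ c ∧ isTOf t₂ t₁ ∧ isTOf t₃ t₂ ∧ isTOf t t₃

/-- `z` is the cardinal `0`, the set of all objects with no members. -/
def isZeroCard (z : M) : Prop := sset z ∧ ∀ y, smem y z ↔ ∀ w, ¬ smem w y

/-- `s = S(x)` is the cardinal successor:  `S(x) = {y : (∃z∈y)(y∖{z} ∈ x)}`. -/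
def isSuccOf (s x : M) : Prop :=
  sset s ∧ ∀ y, smem y s ↔
    ∃ z, smem z y ∧ ∃ d, sset d ∧ (∀ w, smem w d ↔ (smem w y ∧ w ≠ z)) ∧ smem d x

/-- `o` is the cardinal `1 = S(0)`. -/
def isOneCard (o : M) : Prop := ∃ z, isZeroCard z ∧ isSuccOf o z

/-- `I` is an inductive set: it contains `0` and is closed under `S`. -/
def isInductiveSet (I : M) : Prop :=
  sset I ∧ (∀ z, isZeroCard z → smem z I) ∧ ∀ a b, smem a I → isSuccOf b a → smem b I

/-- `n` is an internal natural number: it belongs to every inductive set. -/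
def isNat (n : M) : Prop := ∀ I, isInductiveSet I → smem n I

/-- `N` is the set `ℕ` of internal natural numbers. -/
def isNatSet (N : M) : Prop := sset N ∧ ∀ y, smem y N ↔ isNat y

/-- `m + k = n` on cardinals, via disjoint unions. -/
def cardAdd (m k n : M) : Prop :=
  ∃ x y u, smem x m ∧ smem y k ∧ (∀ w, ¬ (smem w x ∧ smem w y)) ∧
    sset u ∧ (∀ w, smem w u ↔ (smem w x ∨ smem w y)) ∧ smem u n

/-- `P` is the cartesian product `x × y` (with type-level pairs). -/
def isProdOf (P x y : M) : Prop :=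
  sset P ∧ ∀ p, smem p P ↔ ∃ a b, smem a x ∧ smem b y ∧ p = spair a b

/-- `k · m = n` on cardinals, via cartesian products. -/
def cardMul (k m n : M) : Prop :=
  ∃ x y P, smem x k ∧ smem y m ∧ isProdOf P x y ∧ smem P n

/-- `m ≤ n` on internal natural numbers: `∃k∈ℕ, m + k = n`. -/
def natLe (m n : M) : Prop := ∃ k, isNat k ∧ cardAdd m k n

/-- The model satisfies `AxCount₍≥₎ : (∀n∈ℕ)(T(n) ≤ n)`. -/
def axCountGeqHolds (M : Type) [LNFU.Structure M] : Prop :=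
  ∀ n : M, isNat n → ∀ t, isTOf t n → natLe t n

/-- The model satisfies `AxCount₍≤₎ : (∀n∈ℕ)(n ≤ T(n))`. -/
def axCountLeqHolds (M : Type) [LNFU.Structure M] : Prop :=
  ∀ n : M, isNat n → ∀ t, isTOf t n → natLe n t

/-- The model satisfies `AxCount : (∀n∈ℕ)(T(n) = n)`. -/
def axCountHolds (M : Type) [LNFU.Structure M] : Prop :=
  ∀ n : M, isNat n → ∀ t, isTOf t n → t = n

/-- The model satisfies the Axiom of Choice: every set of pairwise disjoint
nonempty sets has a transversal. -/
def acHolds (M : Type) [LNFU.Structure M] : Prop :=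
  ∀ X : M, sset X →
    (∀ y, smem y X → sset y ∧ ∃ z, smem z y) →
    (∀ y y', smem y X → smem y' X → y ≠ y' → ∀ z, ¬ (smem z y ∧ smem z y')) →
    ∃ t, sset t ∧ ∀ y, smem y X → ∃! z, smem z y ∧ smem z t

/-- `2^κ` is defined (i.e. `2^κ ≠ ∅`): there is a set `X` with `|ι``X| = κ`. -/
def twoPowDefined (κ : M) : Prop := ∃ X Y, isIotaImageOf Y X ∧ isCardOf κ Y

/-- `P` is the power set of `X`. -/
def isPowerSetOf (P X : M) : Prop :=
  sset P ∧ ∀ z, smem z P ↔ (sset z ∧ ∀ w, smem w z → smem w X)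

/-- `μ = 2^κ` (in the nonempty case): `μ = |P(X)|` for some `X` with `|ι``X| = κ`. -/
def isTwoPowOf (μ κ : M) : Prop :=
  ∃ X Y P, isIotaImageOf Y X ∧ isCardOf κ Y ∧ isPowerSetOf P X ∧ isCardOf μ P

/-- `f` is the internal function `beth : ℕ → NC ∪ {∅}` with `beth(0) = ℵ₀` and
`beth(n+1) = 2^{beth(n)}` (with value `∅` once undefined). -/
def isBethFun (f : M) : Prop :=
  sset f ∧
    (∀ p, smem p f → ∃ n y, isNat n ∧ p = spair n y) ∧
    (∀ n, isNat n → ∃ y, smem (spair n y) f) ∧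
    (∀ n y y', smem (spair n y) f → smem (spair n y') f → y = y') ∧
    (∀ z y, isZeroCard z → smem (spair z y) f → ∃ N, isNatSet N ∧ isCardOf y N) ∧
    (∀ n n' y y', isNat n → isSuccOf n' n →
      smem (spair n y) f → smem (spair n' y') f →
        ((isEmptySet y ∧ isEmptySet y') ∨
          (¬ isEmptySet y ∧
            (isTwoPowOf y' y ∨ (isEmptySet y' ∧ ¬ twoPowDefined y)))))

end Semantics

end NFUweak
namespace NFUweak

/-! ## BFEXTs and the structure ⟨BF, E⟩ inside a model of NFU⁻ᴬᶜ -/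

section BF

variable {M : Type} [LNFU.Structure M]

/-- `R` is an internal binary relation: a set of (type-level) ordered pairs. -/
def isRel (R : M) : Prop := sset R ∧ ∀ p, smem p R → ∃ x y, p = spair x y

/-- `x` belongs to the field `Dom(R) = dom(R) ∪ rng(R)` of the relation `R`. -/
def inField (x R : M) : Prop := ∃ y, smem (spair x y) R ∨ smem (spair y x) R

/-- `D` is the field `Dom(R)` of `R`, as a set. -/
def isFieldSetOf (D R : M) : Prop := sset D ∧ ∀ x, smem x D ↔ inField x R

/-- `R` is a BFEXT: a binary relation that is well-founded (every nonempty
subset of its field has an `R`-minimal element) and extensional. -/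
def isBFEXT (R : M) : Prop :=
  isRel R ∧
    (∀ B, sset B → (∃ b, smem b B) → (∀ b, smem b B → inField b R) →
      ∃ b, smem b B ∧ ∀ c, smem c B → ¬ smem (spair c b) R) ∧
    (∀ a b, inField a R → inField b R →
      (∀ c, smem (spair c a) R ↔ smem (spair c b) R) → a = b)

/-- `x` belongs to the smallest subset of `Dom(R)` containing `a` and closed
under `R`-predecessors. -/
def inSeg (x R a : M) : Prop :=
  ∀ B, sset B → (∀ b, smem b B → inField b R) → smem a B →
    (∀ b c, smem b B → smem (spair c b) R → smem c B) → smem x B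

/-- `s = seg_R(a)`: the restriction of `R` to the smallest subset of `Dom(R)`
containing `a` and closed under `R`-predecessors. -/
def isSegOf (s R a : M) : Prop :=
  sset s ∧ ∀ p, smem p s ↔
    (smem p R ∧ ∃ x y, p = spair x y ∧ inSeg x R a ∧ inSeg y R a)

/-- `R ∈ Ω`: `R` is a BFEXT with `R = seg_R(a)` for some `a ∈ Dom(R)`. -/
def inOmega (R : M) : Prop := isBFEXT R ∧ ∃ a, inField a R ∧ isSegOf R R a

/-- `a = 1_R` is the (unique) top of `R ∈ Ω`. -/
def isTopOf (a R : M) : Prop := inField a R ∧ isSegOf R R a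

/-- `f` is an internal isomorphism between the relations `R` and `S`. -/
def isIsoRel (f R S : M) : Prop :=
  sset f ∧
    (∀ p, smem p f → ∃ x y, p = spair x y ∧ inField x R ∧ inField y S) ∧
    (∀ x, inField x R → ∃ y, smem (spair x y) f) ∧
    (∀ x y y', smem (spair x y) f → smem (spair x y') f → y = y') ∧
    (∀ x x' y, smem (spair x y) f → smem (spair x' y) f → x = x') ∧
    (∀ y, inField y S → ∃ x, smem (spair x y) f) ∧
    (∀ x y x' y', smem (spair x x') f → smem (spair y y') f →
      (smem (spair x y) R ↔ smem (spair x' y') S))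

/-- `R` and `S` are isomorphic relations. -/
def relIso (R S : M) : Prop := ∃ f, isIsoRel f R S

/-- `t = [R]` is the set of all relations isomorphic to `R`. -/
def isTypeOf (t R : M) : Prop := sset t ∧ ∀ S, smem S t ↔ relIso S R

/-- `a ∈ BF`: `a = [R]` for some `R ∈ Ω`. -/
def inBF (a : M) : Prop := ∃ R, inOmega R ∧ isTypeOf a R

/-- `a E b` for `a, b ∈ BF`: for `R ∈ a`, `S ∈ b` there is `x ∈ Dom(S)` with
`⟨x, 1_S⟩ ∈ S` and `R ≅ seg_S(x)`. -/
def erel (a b : M) : Prop :=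
  ∃ R S, smem R a ∧ smem S b ∧
    ∃ x oneS, isTopOf oneS S ∧ smem (spair x oneS) S ∧
      ∃ sg, isSegOf sg S x ∧ relIso R sg

/-- `e` is the set `E ⊆ BF × BF`. -/
def isESet (e : M) : Prop :=
  sset e ∧ ∀ p, smem p e ↔ ∃ a b, p = spair a b ∧ inBF a ∧ inBF b ∧ erel a b

/-- `R' = T(R)`: the relation `{⟨{x},{y}⟩ : ⟨x,y⟩ ∈ R}`. -/
def isTRelOf (R' R : M) : Prop :=
  sset R' ∧ ∀ p, smem p R' ↔
    ∃ x y sx sy, smem (spair x y) R ∧ isSingletonOf sx x ∧ isSingletonOf sy y ∧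
      p = spair sx sy

/-- `t' = T(t)` for (isomorphism) types `t` of well-founded relations:
`T([R]) = [{⟨{x},{y}⟩ : ⟨x,y⟩ ∈ R}]`. -/
def isTTypeOf (t' t : M) : Prop :=
  ∃ R R', smem R t ∧ isTRelOf R' R ∧ isTypeOf t' R'

/-- `y = M₀ = E^ω`, the set of types of BFEXTs with finite domain. -/
def isM0Set (y : M) : Prop :=
  sset y ∧ ∀ a, smem a y ↔
    (inBF a ∧ ∃ R D c, smem R a ∧ isFieldSetOf D R ∧ isCardOf c D ∧ isNat c)

/-- `g` is the internal function `n ↦ M_n = E^{ω+n}` on the internal naturals: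
`M_0 = E^ω` and `M_{n+1} = {a ∈ BF : every E-predecessor of a lies in M_n}`. -/
def isMFun (g : M) : Prop :=
  sset g ∧
    (∀ p, smem p g → ∃ n y, isNat n ∧ p = spair n y) ∧
    (∀ n, isNat n → ∃ y, smem (spair n y) g) ∧
    (∀ n y y', smem (spair n y) g → smem (spair n y') g → y = y') ∧
    (∀ z y, isZeroCard z → smem (spair z y) g → isM0Set y) ∧
    (∀ n n' y y', isNat n → isSuccOf n' n →
      smem (spair n y) g → smem (spair n' y') g →
        (sset y' ∧ ∀ a, smem a y' ↔ (inBF a ∧ ∀ b, inBF b → erel b a → smem b y)))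

end BF

end NFUweak
namespace NFUweak

/-! ## The Simple Theory of Types with Infinity (TSTI) -/

/-- Formulae of the many-sorted language `L_TST`, with named variables:
`mem n i j` is `x^n_i ∈_n x^{n+1}_j`, `eq n i j` is `x^n_i = x^n_j`, and
`all n i φ` is `∀ x^n_i, φ`. -/
inductive TSTFormula : Type
  | mem (n i j : ℕ)
  | eq (n i j : ℕ)
  | fal
  | imp (φ ψ : TSTFormula)
  | all (n i : ℕ) (φ : TSTFormula)

/-- Update a many-sorted valuation at variable `x^n_i`. -/
def tstUpd {M : ℕ → Type} (v : ∀ n, ℕ → M n) (n i : ℕ) (a : M n) : ∀ m, ℕ → M m :=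
  fun m j => if h : m = n ∧ j = i then (congrArg M h.1).symm ▸ a else v m j

/-- Satisfaction of an `L_TST`-formula in the many-sorted structure `⟨M, E⟩`
under the valuation `v`. -/
def TSTFormula.Realize {M : ℕ → Type} (E : ∀ n, M n → M (n + 1) → Prop) :
    TSTFormula → (∀ n, ℕ → M n) → Prop
  | .mem n i j, v => E n (v n i) (v (n + 1) j)
  | .eq n i j, v => v n i = v n j
  | .fal, _ => False
  | .imp φ ψ, v => φ.Realize E v → ψ.Realize E v
  | .all n i φ, v => ∀ a : M n, φ.Realize E (tstUpd v n i a)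

/-- All sorts mentioned in the formula are `< k` (so it is an `L_k`-formula). -/
def TSTFormula.sortsLT : TSTFormula → ℕ → Prop
  | .mem n _ _, k => n + 1 < k
  | .eq n _ _, k => n < k
  | .fal, _ => True
  | .imp φ ψ, k => φ.sortsLT k ∧ ψ.sortsLT k
  | .all n _ φ, k => n < k ∧ φ.sortsLT k

/-- `p : M 2` is the Kuratowski ordered pair `⟨a, b⟩ = {{a},{a,b}}`. -/
def isKPair {M : ℕ → Type} (E : ∀ n, M n → M (n + 1) → Prop)
    (p : M 2) (a b : M 0) : Prop :=
  ∀ s : M 1, E 1 s p ↔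
    ((∀ z, E 0 z s ↔ z = a) ∨ (∀ z, E 0 z s ↔ (z = a ∨ z = b)))

/-- The axiom of Infinity: there are `x¹` and `f³` such that `f³` codes an
injective, non-surjective function from `x¹` to `x¹` (with Kuratowski pairs). -/
def TSTInfinity {M : ℕ → Type} (E : ∀ n, M n → M (n + 1) → Prop) : Prop :=
  ∃ (X : M 1) (f : M 3),
    (∀ p : M 2, E 2 p f → ∃ a b, E 0 a X ∧ E 0 b X ∧ isKPair E p a b) ∧
    (∀ a, E 0 a X → ∃ b p, E 0 b X ∧ E 2 p f ∧ isKPair E p a b) ∧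
    (∀ a b b' p p', E 2 p f → E 2 p' f → isKPair E p a b → isKPair E p' a b' → b = b') ∧
    (∀ a a' b p p', E 2 p f → E 2 p' f → isKPair E p a b → isKPair E p' a' b → a = a') ∧
    (∃ b, E 0 b X ∧ ∀ a p, E 2 p f → ¬ isKPair E p a b)

/-- `⟨M, E⟩` is a model of TSTI: all sorts are nonempty and Extensionality,
Comprehension (for every `L_TST`-formula) and Infinity hold. -/
def IsTSTIModel (M : ℕ → Type) (E : ∀ n, M n → M (n + 1) → Prop) : Prop :=
  (∀ n, Nonempty (M n)) ∧
    (∀ n, ∀ x y : M (n + 1), (∀ z, E n z x ↔ E n z y) → x = y) ∧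
    (∀ (φ : TSTFormula) (n i : ℕ) (v : ∀ m, ℕ → M m),
      ∃ y : M (n + 1), ∀ x : M n, E n x y ↔ φ.Realize E (tstUpd v n i x)) ∧
    TSTInfinity E

/-- `⟨M, E⟩` is a model of the fragment TSTI_k, which only refers to the sorts
`< k` (so `k ≥ 4` is needed for the axiom of Infinity to be expressible). -/
def IsTSTIModelBelow (k : ℕ) (M : ℕ → Type) (E : ∀ n, M n → M (n + 1) → Prop) : Prop :=
  (∀ n, n < k → Nonempty (M n)) ∧
    (∀ n, n + 1 < k → ∀ x y : M (n + 1), (∀ z, E n z x ↔ E n z y) → x = y) ∧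
    (∀ (φ : TSTFormula), φ.sortsLT k → ∀ (n i : ℕ), n + 1 < k →
      ∀ v : ∀ m, ℕ → M m,
        ∃ y : M (n + 1), ∀ x : M n, E n x y ↔ φ.Realize E (tstUpd v n i x)) ∧
    TSTInfinity E

/-! ## The language of arithmetic and the internal arithmetic of a model -/

/-- Function symbols of `L_PA`: `0`, `1`, `+` and `·`. -/
inductive PAFunc : ℕ → Type
  | zero : PAFunc 0
  | one : PAFunc 0
  | add : PAFunc 2
  | mul : PAFunc 2

/-- The language `L_PA` of arithmetic. -/
def LPA : Language := ⟨PAFunc, fun _ => Empty⟩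

/-- The type of internal natural numbers of a model of NFU⁻ᴬᶜ. -/
def NatSub (M : Type) [LNFU.Structure M] : Type := {n : M // isNat n}

/-- An `L_PA`-structure on the internal natural numbers of `M` is the internal
arithmetic if its operations are given by the internal graphs of `0`, `1`,
cardinal addition and cardinal multiplication. -/
def InternalArithOn (M : Type) [LNFU.Structure M] (A : LPA.Structure (NatSub M)) : Prop :=
  isZeroCard (A.funMap PAFunc.zero ![]).val ∧
    isOneCard (A.funMap PAFunc.one ![]).val ∧
    (∀ a b : NatSub M, cardAdd a.val b.val (A.funMap PAFunc.add ![a, b]).val) ∧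
    (∀ a b : NatSub M, cardMul a.val b.val (A.funMap PAFunc.mul ![a, b]).val)

/-- `φ^ℕ` holds in `M`: the sentence `φ` of `L_PA` is true in the internal
arithmetic `⟨ℕ, +, ·, 0, 1⟩` of `M`. -/
def internalPASat (M : Type) [LNFU.Structure M] (φ : LPA.Sentence) : Prop :=
  ∀ A : LPA.Structure (NatSub M), InternalArithOn M A →
    @Sentence.Realize LPA (NatSub M) A φ

end NFUweak
namespace NFUweak

end NFUweak

set_option linter.dupNamespace false
set_option maxHeartbeats 1000000

namespace NFUweak
open FirstOrder Language BoundedFormula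

section Basic
variable {M : Type} [LNFU.Structure M]

lemma mext (h : M ⊨ NFUmAC) {x y : M} (hx : sset x) (hy : sset y)
    (hxy : ∀ z, smem z x ↔ smem z y) : x = y := by
  have hm : weakExtAx ∈ NFUmAC := Set.mem_union_left _ (Set.mem_insert _ _)
  have hr := h.realize_of_mem weakExtAx hm
  simp only [weakExtAx, Sentence.Realize, Formula.Realize, realize_all, realize_imp,
    realize_inf, realize_iff, realize_rel₁, realize_rel₂, realize_bdEqual,
    Term.realize, Sum.elim_inr, Function.comp_apply, Fin.snoc, Fin.castLT, cast_eq] at hr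
  have h2 := hr x y
  norm_num at h2
  exact (h2 hx hy).2 hxy

lemma pair_inj (h : M ⊨ NFUmAC) {a b c d : M} (hp : spair a b = spair c d) :
    a = c ∧ b = d := by
  have hm : pairingAx ∈ NFUmAC := Set.mem_union_left _ (Set.mem_insert_of_mem _ rfl)
  have hr := h.realize_of_mem pairingAx hm
  simp only [pairingAx, Sentence.Realize, Formula.Realize, realize_all, realize_imp,
    realize_inf, realize_bdEqual, Term.realize_functions_apply₂, Term.realize_var,
    Sum.elim_inr, Function.comp_apply, Fin.snoc, Fin.castLT, cast_eq] at hr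
  have h2 := hr a b c d
  norm_num at h2
  exact h2 hp

end Basic

/-- Untyped formulas with absolute de Bruijn indices. -/
inductive LF : Type where
  | fal : LF
  | memv (i j : ℕ) : LF
  | eqv (i j : ℕ) : LF
  | ssetv (i : ℕ) : LF
  | memp (i j k : ℕ) : LF       -- ⟨x_i, x_j⟩ ∈ x_k
  | eqp (i j k : ℕ) : LF        -- x_k = ⟨x_i, x_j⟩
  | imp (φ ψ : LF) : LF
  | all (l : ℕ) (φ : LF) : LF
  deriving DecidableEq

namespace LF

def toBF : LF → (n : ℕ) → LNFU.BoundedFormula Empty n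
  | .fal, _ => BoundedFormula.falsum
  | .memv i j, n => if h : (i < n ∧ j < n) then
      memR.boundedFormula₂ (Term.var (Sum.inr ⟨i, h.1⟩)) (Term.var (Sum.inr ⟨j, h.2⟩))
      else BoundedFormula.falsum
  | .eqv i j, n => if h : (i < n ∧ j < n) then
      Term.bdEqual (Term.var (Sum.inr (⟨i, h.1⟩ : Fin n))) (Term.var (Sum.inr ⟨j, h.2⟩))
      else BoundedFormula.falsum
  | .ssetv i, n => if h : (i < n) then
      setR.boundedFormula₁ (Term.var (Sum.inr ⟨i, h⟩))
      else BoundedFormula.falsum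
  | .memp i j k, n => if h : (i < n ∧ j < n ∧ k < n) then
      memR.boundedFormula₂
        (pairF.apply₂ (Term.var (Sum.inr ⟨i, h.1⟩)) (Term.var (Sum.inr ⟨j, h.2.1⟩)))
        (Term.var (Sum.inr ⟨k, h.2.2⟩))
      else BoundedFormula.falsum
  | .eqp i j k, n => if h : (i < n ∧ j < n ∧ k < n) then
      Term.bdEqual (Term.var (Sum.inr (⟨k, h.2.2⟩ : Fin n)))
        (pairF.apply₂ (Term.var (Sum.inr ⟨i, h.1⟩)) (Term.var (Sum.inr ⟨j, h.2.1⟩)))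
      else BoundedFormula.falsum
  | .imp φ ψ, n => (toBF φ n).imp (toBF ψ n)
  | .all _ φ, n => (toBF φ (n+1)).all

def wf : LF → ℕ → Bool
  | .fal, _ => true
  | .memv i j, n => decide (i < n) && decide (j < n)
  | .eqv i j, n => decide (i < n) && decide (j < n)
  | .ssetv i, n => decide (i < n)
  | .memp i j k, n => decide (i < n) && decide (j < n) && decide (k < n)
  | .eqp i j k, n => decide (i < n) && decide (j < n) && decide (k < n)
  | .imp φ ψ, n => wf φ n && wf ψ n
  | .all _ φ, n => wf φ (n+1)

def lev : LF → ℕ → (ℕ → ℕ) → Bool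
  | .fal, _, _ => true
  | .memv i j, _, σ => σ j == σ i + 1
  | .eqv i j, _, σ => σ i == σ j
  | .ssetv _, _, _ => true
  | .memp i j k, _, σ => (σ i == σ j) && (σ k == σ i + 1)
  | .eqp i j k, _, σ => (σ i == σ j) && (σ k == σ i)
  | .imp φ ψ, n, σ => lev φ n σ && lev ψ n σ
  | .all l φ, n, σ => lev φ (n+1) (fun j => if j = n then l else σ j)

variable {M : Type} [LNFU.Structure M]

def Val : LF → ℕ → (ℕ → M) → Prop
  | .fal, _, _ => False
  | .memv i j, _, w => smem (w i) (w j)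
  | .eqv i j, _, w => w i = w j
  | .ssetv i, _, w => sset (w i)
  | .memp i j k, _, w => smem (spair (w i) (w j)) (w k)
  | .eqp i j k, _, w => w k = spair (w i) (w j)
  | .imp φ ψ, n, w => φ.Val n w → ψ.Val n w
  | .all _ φ, n, w => ∀ a : M, φ.Val (n+1) (fun j => if j = n then a else w j)

theorem strat_of_lev (φ : LF) : ∀ (n : ℕ) (σ : ℕ → ℕ), φ.lev n σ = true →
    stratifiedFrom (Sum.elim (fun e : Empty => Empty.elim e) (fun i : Fin n => σ i.val))
      (φ.toBF n) := by
  induction φ with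
  | fal => intro n σ _; trivial
  | memv i j =>
    intro n σ hl
    simp only [lev, beq_iff_eq] at hl
    simp only [toBF]
    split
    · next hij =>
      show stratifiedFrom _ (BoundedFormula.rel memR
        ![Term.var (Sum.inr ⟨i, hij.1⟩), Term.var (Sum.inr ⟨j, hij.2⟩)])
      refine ⟨σ i, ?_, ?_⟩
      · show Sum.elim _ _ (Sum.inr (⟨i, hij.1⟩ : Fin n)) = σ i
        rfl
      · show Sum.elim _ _ (Sum.inr (⟨j, hij.2⟩ : Fin n)) = σ i + 1
        simpa using hl
    · trivial
  | eqv i j =>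
    intro n σ hl
    simp only [lev, beq_iff_eq] at hl
    simp only [toBF]
    split
    · next hij =>
      show stratifiedFrom _ (BoundedFormula.equal
        (Term.var (Sum.inr (⟨i, hij.1⟩ : Fin n))) (Term.var (Sum.inr ⟨j, hij.2⟩)))
      refine ⟨σ i, rfl, ?_⟩
      show Sum.elim _ _ (Sum.inr (⟨j, hij.2⟩ : Fin n)) = σ i
      simpa using hl.symm
    · trivial
  | ssetv i =>
    intro n σ _
    simp only [toBF]
    split
    · next hi =>
      show stratifiedFrom _ (BoundedFormula.rel setR ![Term.var (Sum.inr ⟨i, hi⟩)])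
      exact ⟨σ i, rfl⟩
    · trivial
  | memp i j k =>
    intro n σ hl
    simp only [lev, Bool.and_eq_true, beq_iff_eq] at hl
    simp only [toBF]
    split
    · next hijk =>
      show stratifiedFrom _ (BoundedFormula.rel memR
        ![Term.func pairF ![Term.var (Sum.inr ⟨i, hijk.1⟩), Term.var (Sum.inr ⟨j, hijk.2.1⟩)],
          Term.var (Sum.inr ⟨k, hijk.2.2⟩)])
      refine ⟨σ i, ?_, ?_⟩
      · show termLevel _ (Term.func pairF _) (σ i)
        intro l
        fin_cases l
        · show Sum.elim _ _ (Sum.inr (⟨i, hijk.1⟩ : Fin n)) = σ i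
          rfl
        · show Sum.elim _ _ (Sum.inr (⟨j, hijk.2.1⟩ : Fin n)) = σ i
          simpa using hl.1.symm
      · show Sum.elim _ _ (Sum.inr (⟨k, hijk.2.2⟩ : Fin n)) = σ i + 1
        simpa using hl.2
    · trivial
  | eqp i j k =>
    intro n σ hl
    simp only [lev, Bool.and_eq_true, beq_iff_eq] at hl
    simp only [toBF]
    split
    · next hijk =>
      show stratifiedFrom _ (BoundedFormula.equal
        (Term.var (Sum.inr (⟨k, hijk.2.2⟩ : Fin n)))
        (Term.func pairF ![Term.var (Sum.inr ⟨i, hijk.1⟩), Term.var (Sum.inr ⟨j, hijk.2.1⟩)]))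
      refine ⟨σ i, ?_, ?_⟩
      · show Sum.elim _ _ (Sum.inr (⟨k, hijk.2.2⟩ : Fin n)) = σ i
        simpa using hl.2
      · show termLevel _ (Term.func pairF _) (σ i)
        intro l
        fin_cases l
        · show Sum.elim _ _ (Sum.inr (⟨i, hijk.1⟩ : Fin n)) = σ i
          rfl
        · show Sum.elim _ _ (Sum.inr (⟨j, hijk.2.1⟩ : Fin n)) = σ i
          simpa using hl.1.symm
    · trivial
  | imp φ ψ ihφ ihψ =>
    intro n σ hl
    simp only [lev, Bool.and_eq_true] at hl
    exact ⟨ihφ n σ hl.1, ihψ n σ hl.2⟩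
  | all l φ ih =>
    intro n σ hl
    simp only [lev] at hl
    refine ⟨l, ?_⟩
    have h2 := ih (n+1) (fun j => if j = n then l else σ j) hl
    have hfun : (Sum.elim (fun e : Empty => Empty.elim e)
        (fun i : Fin (n+1) => if (i : ℕ) = n then l else σ i)) =
        (Sum.elim
          (fun e => (Sum.elim (fun e : Empty => Empty.elim e)
            (fun i : Fin n => σ i)) (Sum.inl e))
          (Fin.snoc (fun i => (Sum.elim (fun e : Empty => Empty.elim e)
            (fun i : Fin n => σ i)) (Sum.inr i)) l)) := by
      funext z
      cases z with
      | inl e => exact Empty.elim e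
      | inr i =>
        simp only [Sum.elim_inr]
        rcases Nat.lt_or_ge (i : ℕ) n with hi | hi
        · rw [if_neg (by omega)]
          have hice : i = Fin.castSucc ⟨(i : ℕ), hi⟩ := by
            apply Fin.ext; simp
          rw [hice, Fin.snoc_castSucc]
          simp
        · have hil : i = Fin.last n := by
            apply Fin.ext; simp only [Fin.val_last]; omega
          rw [hil, Fin.snoc_last, if_pos (by simp [Fin.val_last])]
    rw [← hfun]
    exact h2

theorem isStratified_toBF {m : ℕ} (φ : LF) (σ : ℕ → ℕ) (hl : φ.lev (m+1) σ = true) :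
    IsStratified (φ.toBF (m+1)) :=
  ⟨_, strat_of_lev φ (m+1) σ hl⟩

theorem realize_iff_val (φ : LF) : ∀ (n : ℕ), φ.wf n = true →
    ∀ (e : Empty → M) (xs : Fin n → M) (w : ℕ → M), (∀ j : Fin n, w j.val = xs j) →
    ((φ.toBF n).Realize e xs ↔ φ.Val n w) := by
  induction φ with
  | fal => intro n _ e xs w _; rfl
  | memv i j =>
    intro n hwf e xs w hw
    simp only [wf, Bool.and_eq_true, decide_eq_true_eq] at hwf
    simp only [toBF]
    rw [dif_pos hwf]
    simp only [realize_rel₂, Term.realize_var, Sum.elim_inr, Val]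
    rw [← hw ⟨i, hwf.1⟩, ← hw ⟨j, hwf.2⟩]
    exact Iff.rfl
  | eqv i j =>
    intro n hwf e xs w hw
    simp only [wf, Bool.and_eq_true, decide_eq_true_eq] at hwf
    simp only [toBF]
    rw [dif_pos hwf]
    simp only [realize_bdEqual, Term.realize_var, Sum.elim_inr, Val]
    rw [← hw ⟨i, hwf.1⟩, ← hw ⟨j, hwf.2⟩]
  | ssetv i =>
    intro n hwf e xs w hw
    simp only [wf, decide_eq_true_eq] at hwf
    simp only [toBF]
    rw [dif_pos hwf]
    simp only [realize_rel₁, Term.realize_var, Sum.elim_inr, Val]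
    rw [← hw ⟨i, hwf⟩]
    exact Iff.rfl
  | memp i j k =>
    intro n hwf e xs w hw
    simp only [wf, Bool.and_eq_true, decide_eq_true_eq] at hwf
    obtain ⟨⟨hi, hj⟩, hk⟩ := hwf
    simp only [toBF]
    rw [dif_pos (⟨hi, hj, hk⟩ : i < n ∧ j < n ∧ k < n)]
    simp only [realize_rel₂, Term.realize_functions_apply₂, Term.realize_var,
      Sum.elim_inr, Val]
    rw [← hw ⟨i, hi⟩, ← hw ⟨j, hj⟩, ← hw ⟨k, hk⟩]
    exact Iff.rfl
  | eqp i j k =>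
    intro n hwf e xs w hw
    simp only [wf, Bool.and_eq_true, decide_eq_true_eq] at hwf
    obtain ⟨⟨hi, hj⟩, hk⟩ := hwf
    simp only [toBF]
    rw [dif_pos (⟨hi, hj, hk⟩ : i < n ∧ j < n ∧ k < n)]
    simp only [realize_bdEqual, Term.realize_functions_apply₂, Term.realize_var,
      Sum.elim_inr, Val]
    rw [← hw ⟨i, hi⟩, ← hw ⟨j, hj⟩, ← hw ⟨k, hk⟩]
    exact Iff.rfl
  | imp φ ψ ihφ ihψ =>
    intro n hwf e xs w hw
    simp only [wf, Bool.and_eq_true] at hwf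
    simp only [toBF, realize_imp, Val]
    rw [ihφ n hwf.1 e xs w hw, ihψ n hwf.2 e xs w hw]
  | all l φ ih =>
    intro n hwf e xs w hw
    simp only [wf] at hwf
    simp only [toBF, realize_all, Val]
    refine forall_congr' fun a => ?_
    apply ih (n+1) hwf e (Fin.snoc xs a) (fun j => if j = n then a else w j)
    intro j
    rcases Nat.lt_or_ge (j : ℕ) n with hj | hj
    · have hjc : j = Fin.castSucc ⟨(j : ℕ), hj⟩ := by apply Fin.ext; simp
      rw [hjc, Fin.snoc_castSucc]
      have hco : ((Fin.castSucc ⟨(j : ℕ), hj⟩ : Fin (n+1)) : ℕ) = (j : ℕ) := by simp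
      rw [hco, if_neg (by omega)]
      exact hw ⟨(j : ℕ), hj⟩
    · have hjl : j = Fin.last n := by apply Fin.ext; simp only [Fin.val_last]; omega
      rw [hjl, Fin.snoc_last, if_pos (by simp [Fin.val_last])]

end LF

end NFUweak

namespace NFUweak
open FirstOrder Language BoundedFormula

namespace LF
variable {M : Type} [LNFU.Structure M]

def not_ (φ : LF) : LF := .imp φ .fal
def and_ (φ ψ : LF) : LF := not_ (.imp φ (not_ ψ))
def or_ (φ ψ : LF) : LF := .imp (not_ φ) ψ
def iff_ (φ ψ : LF) : LF := and_ (.imp φ ψ) (.imp ψ φ)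
def ex (l : ℕ) (φ : LF) : LF := not_ (.all l (not_ φ))

@[simp] lemma val_not {φ : LF} {n : ℕ} {w : ℕ → M} :
    (not_ φ).Val n w ↔ ¬ φ.Val n w := Iff.rfl

@[simp] lemma val_and {φ ψ : LF} {n : ℕ} {w : ℕ → M} :
    (and_ φ ψ).Val n w ↔ (φ.Val n w ∧ ψ.Val n w) := by
  simp only [and_, not_, Val]; tauto

@[simp] lemma val_or {φ ψ : LF} {n : ℕ} {w : ℕ → M} :
    (or_ φ ψ).Val n w ↔ (φ.Val n w ∨ ψ.Val n w) := by
  simp only [or_, not_, Val]; tauto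

@[simp] lemma val_iff {φ ψ : LF} {n : ℕ} {w : ℕ → M} :
    (iff_ φ ψ).Val n w ↔ (φ.Val n w ↔ ψ.Val n w) := by
  simp only [iff_, and_, not_, Val]; tauto

@[simp] lemma val_imp {φ ψ : LF} {n : ℕ} {w : ℕ → M} :
    (LF.imp φ ψ).Val n w ↔ (φ.Val n w → ψ.Val n w) := Iff.rfl

@[simp] lemma val_all {l : ℕ} {φ : LF} {n : ℕ} {w : ℕ → M} :
    (LF.all l φ).Val n w ↔ ∀ a : M, φ.Val (n+1) (fun j => if j = n then a else w j) :=
  Iff.rfl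

@[simp] lemma val_ex {l : ℕ} {φ : LF} {n : ℕ} {w : ℕ → M} :
    (ex l φ).Val n w ↔ ∃ a : M, φ.Val (n+1) (fun j => if j = n then a else w j) := by
  simp only [ex, not_, Val]
  rw [← not_forall_not]
  tauto

@[simp] lemma val_memv {i j n : ℕ} {w : ℕ → M} :
    (LF.memv i j).Val n w ↔ smem (w i) (w j) := Iff.rfl
@[simp] lemma val_eqv {i j n : ℕ} {w : ℕ → M} :
    (LF.eqv i j).Val n w ↔ (w i = w j) := Iff.rfl
@[simp] lemma val_ssetv {i n : ℕ} {w : ℕ → M} :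
    (LF.ssetv i).Val n w ↔ sset (w i) := Iff.rfl
@[simp] lemma val_memp {i j k n : ℕ} {w : ℕ → M} :
    (LF.memp i j k).Val n w ↔ smem (spair (w i) (w j)) (w k) := Iff.rfl
@[simp] lemma val_eqp {i j k n : ℕ} {w : ℕ → M} :
    (LF.eqp i j k).Val n w ↔ (w k = spair (w i) (w j)) := Iff.rfl
@[simp] lemma val_fal {n : ℕ} {w : ℕ → M} : (LF.fal).Val n w ↔ False := Iff.rfl

end LF

section Comprehension
variable {M : Type} [LNFU.Structure M]

theorem comprehension (h : M ⊨ NFUmAC) (m : ℕ) (φ : LF) (hwf : φ.wf (m+1) = true)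
    (σ : ℕ → ℕ) (hl : φ.lev (m+1) σ = true) (v : Fin m → M) (w : ℕ → M)
    (hw : ∀ j : Fin m, w j.val = v j) :
    ∃ y : M, sset y ∧ ∀ x : M,
      smem x y ↔ φ.Val (m+1) (fun j => if j = m then x else w j) := by
  have hmem : comprehensionAx m (φ.toBF (m+1)) ∈ NFUmAC :=
    Set.mem_union_right _ ⟨m, φ.toBF (m+1), LF.isStratified_toBF φ σ hl, rfl⟩
  have hr := h.realize_of_mem _ hmem
  have hr2 : ∀ xs : Fin m → M,
      BoundedFormula.Realize (∃' (setR.boundedFormula₁ (Term.var (Sum.inr ⟨m, by omega⟩)) ⊓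
        ∀' (memR.boundedFormula₂
              (Term.var (Sum.inr ⟨m + 1, by omega⟩)) (Term.var (Sum.inr ⟨m, by omega⟩)) ⇔
            (φ.toBF (m+1)).liftAt 1 m))) (default : Empty → M) xs :=
    realize_alls.mp hr
  obtain ⟨y, hy⟩ := realize_ex.mp (hr2 v)
  rw [realize_inf] at hy
  obtain ⟨hy1, hy2⟩ := hy
  refine ⟨y, ?_, ?_⟩
  · have := realize_rel₁.mp hy1
    rw [Term.realize_var, Sum.elim_inr] at this
    have he : (⟨m, by omega⟩ : Fin (m+1)) = Fin.last m := rfl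
    rw [he, Fin.snoc_last] at this
    exact this
  · intro x
    have h3 := realize_all.mp hy2 x
    rw [realize_iff, realize_rel₂, Term.realize_var, Term.realize_var,
      Sum.elim_inr, Sum.elim_inr] at h3
    have he1 : (⟨m + 1, by omega⟩ : Fin (m+2)) = Fin.last (m+1) := rfl
    have he2 : (⟨m, by omega⟩ : Fin (m+2)) = Fin.castSucc (Fin.last m) := rfl
    rw [he1, he2, Fin.snoc_last, Fin.snoc_castSucc, Fin.snoc_last] at h3
    have h4 := realize_liftAt_one (n := m+1) (m := m) (by omega)
      (φ := φ.toBF (m+1)) (v := (default : Empty → M))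
      (xs := Fin.snoc (Fin.snoc v y) x)
    rw [h4] at h3
    rw [LF.realize_iff_val φ (m+1) hwf _ _ (fun j => if (j : ℕ) = m then x else w j) ?_] at h3
    · exact h3
    · intro j
      dsimp only [Function.comp_apply]
      rcases Nat.lt_or_ge (j : ℕ) m with hj | hj
      · have hjc : j = Fin.castSucc ⟨(j : ℕ), hj⟩ := by apply Fin.ext; simp
        rw [if_neg (by omega), if_pos hj, Fin.snoc_castSucc, hjc, Fin.snoc_castSucc]
        simpa using hw ⟨(j : ℕ), hj⟩
      · have hjl : j = Fin.last m := by apply Fin.ext; simp only [Fin.val_last]; omega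
        subst hjl
        rw [if_pos (by simp), if_neg (by simp)]
        have hsl : (Fin.last m).succ = Fin.last (m+1) := rfl
        rw [hsl, Fin.snoc_last]

theorem comp1 (h : M ⊨ NFUmAC) (φ : LF) (hwf : φ.wf 2 = true)
    (σ : ℕ → ℕ) (hl : φ.lev 2 σ = true) (A : M) :
    ∃ y : M, sset y ∧ ∀ x : M,
      smem x y ↔ φ.Val 2 (fun j => if j = 1 then x else A) :=
  comprehension h 1 φ hwf σ hl ![A] (fun _ => A) (fun j => by fin_cases j <;> simp)

theorem comp2 (h : M ⊨ NFUmAC) (φ : LF) (hwf : φ.wf 3 = true)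
    (σ : ℕ → ℕ) (hl : φ.lev 3 σ = true) (A B : M) :
    ∃ y : M, sset y ∧ ∀ x : M,
      smem x y ↔ φ.Val 3 (fun j => if j = 2 then x else if j = 1 then B else A) :=
  comprehension h 2 φ hwf σ hl ![A, B] (fun j => if j = 1 then B else A)
    (fun j => by fin_cases j <;> simp)

theorem comp0 (h : M ⊨ NFUmAC) (φ : LF) (hwf : φ.wf 1 = true)
    (σ : ℕ → ℕ) (hl : φ.lev 1 σ = true) (d : M) :
    ∃ y : M, sset y ∧ ∀ x : M,
      smem x y ↔ φ.Val 1 (fun j => if j = 0 then x else d) :=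
  comprehension h 0 φ hwf σ hl (fun i => i.elim0) (fun _ => d) (fun j => j.elim0)

end Comprehension
end NFUweak

namespace NFUweak
open FirstOrder Language
set_option linter.unusedSectionVars false

/-- Flattened form of `isBijFunc`. -/
def BIJ {M : Type} [LNFU.Structure M] (F X Y : M) : Prop :=
  sset F ∧
  (∀ p, smem p F → ∃ a b, p = spair a b ∧ smem a X ∧ smem b Y) ∧
  (∀ a, smem a X → ∃ b, smem (spair a b) F) ∧
  (∀ a b b', smem (spair a b) F → smem (spair a b') F → b = b') ∧
  (∀ a a' b, smem (spair a b) F → smem (spair a' b) F → a = a') ∧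
  (∀ b, smem b Y → ∃ a, smem (spair a b) F)

lemma BIJ_iff {M : Type} [LNFU.Structure M] {F X Y : M} :
    BIJ F X Y ↔ isBijFunc F X Y := by
  unfold BIJ isBijFunc isInjFunc isFunc
  tauto

/-- internal bijection formula: variables `f X Y`, next quantifier depth `d`,
elements of `X`, `Y` at level `e`. -/
def bijLF (f X Y d e : ℕ) : LF :=
  (LF.ssetv f).and_
  (((LF.all e ((LF.memv d f).imp (.ex e (.ex e ((LF.eqp (d+1) (d+2) d).and_
      ((LF.memv (d+1) X).and_ (.memv (d+2) Y)))))))).and_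
  ((LF.all e ((LF.memv d X).imp (.ex e (.memp d (d+1) f)))).and_
  ((LF.all e (.all e (.all e ((LF.memp d (d+1) f).imp
      ((LF.memp d (d+2) f).imp (.eqv (d+1) (d+2))))))).and_
  ((LF.all e (.all e (.all e ((LF.memp d (d+2) f).imp
      ((LF.memp (d+1) (d+2) f).imp (.eqv d (d+1))))))).and_
  (LF.all e ((LF.memv d Y).imp (.ex e (.memp (d+1) d f))))))))

section Sets
variable {M : Type} [LNFU.Structure M] [Nonempty M]

lemma ex_union (h : M ⊨ NFUmAC) (A B : M) :
    ∃ u, sset u ∧ ∀ z, smem z u ↔ (smem z A ∨ smem z B) := by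
  obtain ⟨u, hu, hc⟩ := comp2 h (LF.or_ (.memv 2 0) (.memv 2 1)) (by rfl)
    (fun j => if j = 2 then 0 else 1) (by rfl) A B
  refine ⟨u, hu, fun z => (hc z).trans ?_⟩
  simp

lemma ex_empty (h : M ⊨ NFUmAC) : ∃ e : M, sset e ∧ ∀ z, ¬ smem z e := by
  obtain ⟨u, hu, hc⟩ := comp0 h .fal (by rfl) (fun _ => 0) (by rfl) (Classical.arbitrary M)
  refine ⟨u, hu, fun z hz => ?_⟩
  exact (hc z).mp hz

lemma ex_sing (h : M ⊨ NFUmAC) (a : M) : ∃ s, sset s ∧ ∀ w, smem w s ↔ w = a := by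
  obtain ⟨s, hs, hc⟩ := comp1 h (.eqv 1 0) (by rfl) (fun _ => 0) (by rfl) a
  refine ⟨s, hs, fun w => (hc w).trans ?_⟩
  simp

lemma ex_diff (h : M ⊨ NFUmAC) (A a : M) :
    ∃ d, sset d ∧ ∀ w, smem w d ↔ (smem w A ∧ w ≠ a) := by
  obtain ⟨s, hs, hc⟩ := comp2 h ((LF.memv 2 0).and_ (.not_ (.eqv 2 1)))
    (by rfl) (fun j => if j = 0 then 1 else 0) (by rfl) A a
  refine ⟨s, hs, fun w => (hc w).trans ?_⟩
  simp

lemma ex_id (h : M ⊨ NFUmAC) (X : M) :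
    ∃ I, sset I ∧ ∀ p, smem p I ↔ ∃ b, smem b X ∧ p = spair b b := by
  obtain ⟨s, hs, hc⟩ := comp1 h (LF.ex 0 ((LF.memv 2 0).and_ (.eqp 2 2 1)))
    (by rfl) (fun j => if j = 0 then 1 else 0) (by rfl) X
  refine ⟨s, hs, fun w => (hc w).trans ?_⟩
  simp

lemma ex_inv (h : M ⊨ NFUmAC) (f : M) :
    ∃ g, sset g ∧ ∀ p, smem p g ↔ ∃ a b, smem (spair a b) f ∧ p = spair b a := by
  obtain ⟨s, hs, hc⟩ := comp1 h (LF.ex 0 (.ex 0 ((LF.memp 2 3 0).and_ (.eqp 3 2 1))))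
    (by rfl) (fun j => if j = 0 then 1 else 0) (by rfl) f
  refine ⟨s, hs, fun w => (hc w).trans ?_⟩
  simp

lemma ex_compRel (h : M ⊨ NFUmAC) (f g : M) :
    ∃ c, sset c ∧ ∀ p, smem p c ↔
      ∃ a b d, smem (spair a b) f ∧ smem (spair b d) g ∧ p = spair a d := by
  obtain ⟨s, hs, hc⟩ := comp2 h
    (LF.ex 0 (.ex 0 (.ex 0 ((LF.memp 3 4 0).and_ ((LF.memp 4 5 1).and_ (.eqp 3 5 2))))))
    (by rfl) (fun j => if j < 2 then 1 else 0) (by rfl) f g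
  refine ⟨s, hs, fun w => (hc w).trans ?_⟩
  simp

lemma ex_iota (h : M ⊨ NFUmAC) (X : M) :
    ∃ Y, sset Y ∧ ∀ s, smem s Y ↔ ∃ a, smem a X ∧ isSingletonOf s a := by
  obtain ⟨Y, hY, hc⟩ := comp1 h
    (LF.ex 0 ((LF.memv 2 0).and_ ((LF.ssetv 1).and_
      (.all 0 (.iff_ (.memv 3 1) (.eqv 3 2))))))
    (by rfl) (fun j => if j ≤ 1 then 1 else 0) (by rfl) X
  refine ⟨Y, hY, fun s => (hc s).trans ?_⟩
  simp [isSingletonOf]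

lemma ex_pre (h : M ⊨ NFUmAC) (f S : M) :
    ∃ P, sset P ∧ ∀ a, smem a P ↔ ∃ b, smem (spair a b) f ∧ smem b S := by
  obtain ⟨s, hs, hc⟩ := comp2 h (LF.ex 0 ((LF.memp 2 3 0).and_ (.memv 3 1)))
    (by rfl) (fun j => if j < 2 then 1 else 0) (by rfl) f S
  refine ⟨s, hs, fun w => (hc w).trans ?_⟩
  simp

lemma ex_restr2 (h : M ⊨ NFUmAC) (f S : M) :
    ∃ r, sset r ∧ ∀ p, smem p r ↔ ∃ a b, p = spair a b ∧ smem p f ∧ smem b S := by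
  obtain ⟨s, hs, hc⟩ := comp2 h
    (LF.ex 0 (.ex 0 ((LF.eqp 3 4 2).and_ ((LF.memv 2 0).and_ (.memv 4 1)))))
    (by rfl) (fun j => if j < 2 then 1 else 0) (by rfl) f S
  refine ⟨s, hs, fun w => (hc w).trans ?_⟩
  simp

lemma ex_allsets (h : M ⊨ NFUmAC) : ∃ V : M, sset V ∧ ∀ z, smem z V ↔ sset z := by
  obtain ⟨s, hs, hc⟩ := comp0 (M := M) h (LF.ssetv 0) (by rfl) (fun _ => 0) (by rfl)
    (Classical.arbitrary M)
  refine ⟨s, hs, fun w => (hc w).trans ?_⟩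
  simp

lemma ex_lift (h : M ⊨ NFUmAC) (f : M) :
    ∃ F, sset F ∧ ∀ p, smem p F ↔ ∃ a b sa sb, smem (spair a b) f ∧
      isSingletonOf sa a ∧ isSingletonOf sb b ∧ p = spair sa sb := by
  obtain ⟨s, hs, hc⟩ := comp1 h
    (LF.ex 0 (.ex 0 (.ex 1 (.ex 1 ((LF.memp 2 3 0).and_
      (((LF.ssetv 4).and_ (.all 0 (.iff_ (.memv 6 4) (.eqv 6 2)))).and_
      ((((LF.ssetv 5).and_ (.all 0 (.iff_ (.memv 6 5) (.eqv 6 3))))).and_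
        (.eqp 4 5 1))))))))
    (by rfl) (fun j => if j = 2 then 0 else if j = 3 then 0 else 1) (by rfl) f
  refine ⟨s, hs, fun w => (hc w).trans ?_⟩
  simp [isSingletonOf]

lemma ex_card (h : M ⊨ NFUmAC) (Y : M) :
    ∃ c, sset c ∧ ∀ z, smem z c ↔ ∃ f, BIJ f z Y := by
  obtain ⟨s, hs, hc⟩ := comp1 h (LF.ex 1 (bijLF 2 1 0 3 0))
    (by rfl) (fun _ => 1) (by rfl) Y
  refine ⟨s, hs, fun w => (hc w).trans ?_⟩
  simp [bijLF, BIJ]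

end Sets
end NFUweak

namespace NFUweak
open FirstOrder Language
set_option linter.unusedSectionVars false

section BigSets
variable {M : Type} [LNFU.Structure M] [Nonempty M]

lemma ex_P1 (h : M ⊨ NFUmAC) :
    ∃ P : M, sset P ∧ ∀ c, smem c P ↔
      (sset c ∧ (∀ y y', smem y c → smem y' c → ∃ f, BIJ f y y') ∧
        (∀ y z, smem y c → (∃ f, BIJ f z y) → smem z c)) := by
  obtain ⟨P, hP, hc⟩ := comp0 (M := M) h
    ((LF.ssetv 0).and_
      ((LF.all 2 (.all 2 ((LF.memv 1 0).imp
        ((LF.memv 2 0).imp (.ex 2 (bijLF 3 1 2 4 1)))))).and_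
       (LF.all 2 (.all 2 ((LF.memv 1 0).imp
        ((LF.ex 2 (bijLF 3 2 1 4 1)).imp (.memv 2 0)))))))
    (by rfl) (fun _ => 3) (by rfl) (Classical.arbitrary M)
  refine ⟨P, hP, fun c => (hc c).trans ?_⟩
  simp [bijLF, BIJ]

lemma ex_P2 (h : M ⊨ NFUmAC) :
    ∃ P : M, sset P ∧ ∀ c, smem c P ↔
      (sset c ∧ ∀ u C f, smem u c → sset C → (∀ w, smem w C → smem w u) →
        BIJ f u C → ∀ w, smem w u → smem w C) := by
  obtain ⟨P, hP, hc⟩ := comp0 (M := M) h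
    ((LF.ssetv 0).and_
      (LF.all 2 (.all 2 (.all 2 ((LF.memv 1 0).imp
        ((LF.ssetv 2).imp
          ((LF.all 1 ((LF.memv 4 2).imp (.memv 4 1))).imp
            ((bijLF 3 1 2 4 1).imp
              (.all 1 ((LF.memv 4 1).imp (.memv 4 2)))))))))))
    (by rfl) (fun _ => 3) (by rfl) (Classical.arbitrary M)
  refine ⟨P, hP, fun c => (hc c).trans ?_⟩
  simp [bijLF, BIJ]

end BigSets
end NFUweak

namespace NFUweak
open FirstOrder Language
set_option linter.unusedSectionVars false

section BijSem
variable {M : Type} [LNFU.Structure M] [Nonempty M]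

/-- Equipollence via flattened bijections. -/
def EQP {M : Type} [LNFU.Structure M] (X Y : M) : Prop := ∃ f, BIJ f X Y

lemma BIJ.dom_mem (h : M ⊨ NFUmAC) {f X Y a b : M} (hf : BIJ f X Y)
    (hab : smem (spair a b) f) : smem a X ∧ smem b Y := by
  obtain ⟨a', b', he, ha', hb'⟩ := hf.2.1 _ hab
  obtain ⟨h1, h2⟩ := pair_inj h he
  subst h1; subst h2; exact ⟨ha', hb'⟩

lemma BIJ.transport_dom {f X Y X' : M} (hf : BIJ f X Y)
    (hX : ∀ z, smem z X ↔ smem z X') : BIJ f X' Y := by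
  obtain ⟨h1, h2, h3, h4, h5, h6⟩ := hf
  exact ⟨h1, fun p hp => by
      obtain ⟨a, b, he, ha, hb⟩ := h2 p hp
      exact ⟨a, b, he, (hX a).mp ha, hb⟩,
    fun a ha => h3 a ((hX a).mpr ha), h4, h5, h6⟩

lemma BIJ.transport_cod {f X Y Y' : M} (hf : BIJ f X Y)
    (hY : ∀ z, smem z Y ↔ smem z Y') : BIJ f X Y' := by
  obtain ⟨h1, h2, h3, h4, h5, h6⟩ := hf
  exact ⟨h1, fun p hp => by
      obtain ⟨a, b, he, ha, hb⟩ := h2 p hp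
      exact ⟨a, b, he, ha, (hY b).mp hb⟩,
    h3, h4, h5, fun b hb => h6 b ((hY b).mpr hb)⟩

lemma bij_id (h : M ⊨ NFUmAC) {X X' : M} (hXX : ∀ z, smem z X ↔ smem z X') :
    ∃ f, BIJ f X X' := by
  obtain ⟨I, hI, hc⟩ := ex_id h X
  refine ⟨I, hI, ?_, ?_, ?_, ?_, ?_⟩
  · intro p hp
    obtain ⟨b, hb, rfl⟩ := (hc p).mp hp
    exact ⟨b, b, rfl, hb, (hXX b).mp hb⟩
  · intro a ha
    exact ⟨a, (hc _).mpr ⟨a, ha, rfl⟩⟩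
  · intro a b b' hab hab'
    obtain ⟨c, hcX, hce⟩ := (hc _).mp hab
    obtain ⟨c', hcX', hce'⟩ := (hc _).mp hab'
    obtain ⟨h1, h2⟩ := pair_inj h hce
    obtain ⟨h1', h2'⟩ := pair_inj h hce'
    exact h2.trans (h1.symm.trans (h1'.trans h2'.symm))
  · intro a a' b hab hab'
    obtain ⟨c, hcX, hce⟩ := (hc _).mp hab
    obtain ⟨c', hcX', hce'⟩ := (hc _).mp hab'
    obtain ⟨h1, h2⟩ := pair_inj h hce
    obtain ⟨h1', h2'⟩ := pair_inj h hce'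
    exact h1.trans (h2.symm.trans (h2'.trans h1'.symm))
  · intro b hb
    exact ⟨b, (hc _).mpr ⟨b, (hXX b).mpr hb, rfl⟩⟩

lemma bij_inv (h : M ⊨ NFUmAC) {f X Y : M} (hf : BIJ f X Y) : ∃ g, BIJ g Y X := by
  obtain ⟨g, hg, hc⟩ := ex_inv h f
  refine ⟨g, hg, ?_, ?_, ?_, ?_, ?_⟩
  · intro p hp
    obtain ⟨a, b, hab, rfl⟩ := (hc p).mp hp
    obtain ⟨ha, hb⟩ := hf.dom_mem h hab
    exact ⟨b, a, rfl, hb, ha⟩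
  · intro b hb
    obtain ⟨a, ha⟩ := hf.2.2.2.2.2 b hb
    exact ⟨a, (hc _).mpr ⟨a, b, ha, rfl⟩⟩
  · intro b a a' h1 h2
    obtain ⟨c, d, hcd, he⟩ := (hc _).mp h1
    obtain ⟨c', d', hcd', he'⟩ := (hc _).mp h2
    obtain ⟨e1, e2⟩ := pair_inj h he
    obtain ⟨e1', e2'⟩ := pair_inj h he'
    subst e1; subst e2; subst e1'; subst e2'
    exact hf.2.2.2.2.1 _ _ _ hcd hcd'
  · intro b b' a h1 h2
    obtain ⟨c, d, hcd, he⟩ := (hc _).mp h1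
    obtain ⟨c', d', hcd', he'⟩ := (hc _).mp h2
    obtain ⟨e1, e2⟩ := pair_inj h he
    obtain ⟨e1', e2'⟩ := pair_inj h he'
    subst e1; subst e2; subst e1'; subst e2'
    exact hf.2.2.2.1 _ _ _ hcd hcd'
  · intro a ha
    obtain ⟨b, hb⟩ := hf.2.2.1 a ha
    exact ⟨b, (hc _).mpr ⟨a, b, hb, rfl⟩⟩

lemma bij_comp (h : M ⊨ NFUmAC) {f g X Y Z : M} (hf : BIJ f X Y) (hg : BIJ g Y Z) :
    ∃ k, BIJ k X Z := by
  obtain ⟨k, hk, hc⟩ := ex_compRel h f g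
  refine ⟨k, hk, ?_, ?_, ?_, ?_, ?_⟩
  · intro p hp
    obtain ⟨a, b, d, h1, h2, rfl⟩ := (hc p).mp hp
    exact ⟨a, d, rfl, (hf.dom_mem h h1).1, (hg.dom_mem h h2).2⟩
  · intro a ha
    obtain ⟨b, hb⟩ := hf.2.2.1 a ha
    obtain ⟨d, hd⟩ := hg.2.2.1 b (hf.dom_mem h hb).2
    exact ⟨d, (hc _).mpr ⟨a, b, d, hb, hd, rfl⟩⟩
  · intro a d d' h1 h2
    obtain ⟨a1, b1, d1, hf1, hg1, he1⟩ := (hc _).mp h1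
    obtain ⟨a2, b2, d2, hf2, hg2, he2⟩ := (hc _).mp h2
    obtain ⟨e1, e2⟩ := pair_inj h he1
    obtain ⟨e3, e4⟩ := pair_inj h he2
    subst e1; subst e2; subst e3; subst e4
    have hb12 : b1 = b2 := hf.2.2.2.1 _ _ _ hf1 hf2
    subst hb12
    exact hg.2.2.2.1 _ _ _ hg1 hg2
  · intro a a' d h1 h2
    obtain ⟨a1, b1, d1, hf1, hg1, he1⟩ := (hc _).mp h1
    obtain ⟨a2, b2, d2, hf2, hg2, he2⟩ := (hc _).mp h2
    obtain ⟨e1, e2⟩ := pair_inj h he1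
    obtain ⟨e3, e4⟩ := pair_inj h he2
    subst e1; subst e2; subst e3; subst e4
    have hb12 : b1 = b2 := hg.2.2.2.2.1 _ _ _ hg1 hg2
    subst hb12
    exact hf.2.2.2.2.1 _ _ _ hf1 hf2
  · intro d hd
    obtain ⟨b, hb⟩ := hg.2.2.2.2.2 d hd
    obtain ⟨a, ha⟩ := hf.2.2.2.2.2 b (hg.dom_mem h hb).1
    exact ⟨a, (hc _).mpr ⟨a, b, d, ha, hb, rfl⟩⟩

lemma eqp_of_ext (h : M ⊨ NFUmAC) {X X' : M} (hXX : ∀ z, smem z X ↔ smem z X') :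
    EQP X X' := bij_id h hXX

lemma EQP.symm (h : M ⊨ NFUmAC) {X Y : M} (he : EQP X Y) : EQP Y X := by
  obtain ⟨f, hf⟩ := he; exact bij_inv h hf

lemma EQP.trans (h : M ⊨ NFUmAC) {X Y Z : M} (h1 : EQP X Y) (h2 : EQP Y Z) : EQP X Z := by
  obtain ⟨f, hf⟩ := h1; obtain ⟨g, hg⟩ := h2; exact bij_comp h hf hg

lemma bij_union (h : M ⊨ NFUmAC) {f g A B C D U V : M}
    (hf : BIJ f A B) (hg : BIJ g C D)
    (hAC : ∀ z, ¬ (smem z A ∧ smem z C)) (hBD : ∀ z, ¬ (smem z B ∧ smem z D))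
    (hU : ∀ z, smem z U ↔ (smem z A ∨ smem z C))
    (hV : ∀ z, smem z V ↔ (smem z B ∨ smem z D)) :
    ∃ k, BIJ k U V := by
  obtain ⟨k, hk, hc⟩ := ex_union h f g
  refine ⟨k, hk, ?_, ?_, ?_, ?_, ?_⟩
  · intro p hp
    rcases (hc p).mp hp with hp | hp
    · obtain ⟨a, b, rfl, ha, hb⟩ := hf.2.1 p hp
      exact ⟨a, b, rfl, (hU a).mpr (Or.inl ha), (hV b).mpr (Or.inl hb)⟩
    · obtain ⟨a, b, rfl, ha, hb⟩ := hg.2.1 p hp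
      exact ⟨a, b, rfl, (hU a).mpr (Or.inr ha), (hV b).mpr (Or.inr hb)⟩
  · intro a ha
    rcases (hU a).mp ha with ha | ha
    · obtain ⟨b, hb⟩ := hf.2.2.1 a ha
      exact ⟨b, (hc _).mpr (Or.inl hb)⟩
    · obtain ⟨b, hb⟩ := hg.2.2.1 a ha
      exact ⟨b, (hc _).mpr (Or.inr hb)⟩
  · intro a b b' h1 h2
    rcases (hc _).mp h1 with h1 | h1 <;> rcases (hc _).mp h2 with h2 | h2
    · exact hf.2.2.2.1 _ _ _ h1 h2
    · exact absurd ⟨(hf.dom_mem h h1).1, (hg.dom_mem h h2).1⟩ (hAC a)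
    · exact absurd ⟨(hf.dom_mem h h2).1, (hg.dom_mem h h1).1⟩ (hAC a)
    · exact hg.2.2.2.1 _ _ _ h1 h2
  · intro a a' b h1 h2
    rcases (hc _).mp h1 with h1 | h1 <;> rcases (hc _).mp h2 with h2 | h2
    · exact hf.2.2.2.2.1 _ _ _ h1 h2
    · exact absurd ⟨(hf.dom_mem h h1).2, (hg.dom_mem h h2).2⟩ (hBD b)
    · exact absurd ⟨(hf.dom_mem h h2).2, (hg.dom_mem h h1).2⟩ (hBD b)
    · exact hg.2.2.2.2.1 _ _ _ h1 h2
  · intro b hb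
    rcases (hV b).mp hb with hb | hb
    · obtain ⟨a, ha⟩ := hf.2.2.2.2.2 b hb
      exact ⟨a, (hc _).mpr (Or.inl ha)⟩
    · obtain ⟨a, ha⟩ := hg.2.2.2.2.2 b hb
      exact ⟨a, (hc _).mpr (Or.inr ha)⟩

/-- Restricting a bijection by a codomain predicate-set `S`. `P = f⁻¹[S]`,
`T` any set whose members are those of `Y` that are in `S`. -/
lemma bij_restr (h : M ⊨ NFUmAC) {f X Y S T : M} (hf : BIJ f X Y)
    (hT : ∀ b, smem b T ↔ (smem b Y ∧ smem b S)) :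
    ∃ P k, sset P ∧ (∀ a, smem a P ↔ ∃ b, smem (spair a b) f ∧ smem b S) ∧
      BIJ k P T := by
  obtain ⟨P, hP, hcP⟩ := ex_pre h f S
  obtain ⟨k, hk, hck⟩ := ex_restr2 h f S
  refine ⟨P, k, hP, hcP, hk, ?_, ?_, ?_, ?_, ?_⟩
  · intro p hp
    obtain ⟨a, b, rfl, hpf, hbS⟩ := (hck p).mp hp
    exact ⟨a, b, rfl, (hcP a).mpr ⟨b, hpf, hbS⟩, (hT b).mpr ⟨(hf.dom_mem h hpf).2, hbS⟩⟩
  · intro a ha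
    obtain ⟨b, hb, hbS⟩ := (hcP a).mp ha
    exact ⟨b, (hck _).mpr ⟨a, b, rfl, hb, hbS⟩⟩
  · intro a b b' h1 h2
    obtain ⟨a1, b1, he1, h1f, _⟩ := (hck _).mp h1
    obtain ⟨a2, b2, he2, h2f, _⟩ := (hck _).mp h2
    exact hf.2.2.2.1 _ _ _ h1f h2f
  · intro a a' b h1 h2
    obtain ⟨a1, b1, he1, h1f, _⟩ := (hck _).mp h1
    obtain ⟨a2, b2, he2, h2f, _⟩ := (hck _).mp h2
    exact hf.2.2.2.2.1 _ _ _ h1f h2f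
  · intro b hb
    obtain ⟨hbY, hbS⟩ := (hT b).mp hb
    obtain ⟨a, ha⟩ := hf.2.2.2.2.2 b hbY
    exact ⟨a, (hck _).mpr ⟨a, b, rfl, ha, hbS⟩⟩

lemma sing_mem {s a : M} (hs : isSingletonOf s a) : smem a s := (hs.2 a).mpr rfl

lemma sing_right_unique {s a b : M} (hs : isSingletonOf s a) (hs' : isSingletonOf s b) :
    a = b := (hs'.2 a).mp (sing_mem hs)

lemma sing_left_unique (h : M ⊨ NFUmAC) {s s' a : M} (hs : isSingletonOf s a)
    (hs' : isSingletonOf s' a) : s = s' :=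
  mext h hs.1 hs'.1 (fun z => (hs.2 z).trans (hs'.2 z).symm)

lemma ex_sing' (h : M ⊨ NFUmAC) (a : M) : ∃ s : M, isSingletonOf s a := by
  obtain ⟨s, hs, hc⟩ := ex_sing h a
  exact ⟨s, hs, hc⟩

/-- Lifting a bijection to the ι-images. -/
lemma bij_lift (h : M ⊨ NFUmAC) {f X Z Y W : M} (hf : BIJ f X Z)
    (hY : isIotaImageOf Y X) (hW : isIotaImageOf W Z) : ∃ F, BIJ F Y W := by
  obtain ⟨F, hF, hc⟩ := ex_lift h f
  refine ⟨F, hF, ?_, ?_, ?_, ?_, ?_⟩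
  · intro p hp
    obtain ⟨a, b, sa, sb, habf, hsa, hsb, rfl⟩ := (hc p).mp hp
    obtain ⟨haX, hbZ⟩ := hf.dom_mem h habf
    exact ⟨sa, sb, rfl, (hY.2 sa).mpr ⟨a, haX, hsa⟩, (hW.2 sb).mpr ⟨b, hbZ, hsb⟩⟩
  · intro sa hsa
    obtain ⟨a, haX, hsa'⟩ := (hY.2 sa).mp hsa
    obtain ⟨b, hb⟩ := hf.2.2.1 a haX
    obtain ⟨sb, hsb⟩ := ex_sing' h b
    exact ⟨sb, (hc _).mpr ⟨a, b, sa, sb, hb, hsa', hsb, rfl⟩⟩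
  · intro sa sb sb' h1 h2
    obtain ⟨a1, b1, s1, t1, hf1, hs1, ht1, he1⟩ := (hc _).mp h1
    obtain ⟨a2, b2, s2, t2, hf2, hs2, ht2, he2⟩ := (hc _).mp h2
    obtain ⟨e1, e2⟩ := pair_inj h he1
    obtain ⟨e3, e4⟩ := pair_inj h he2
    subst e1; subst e2; subst e3; subst e4
    have ha12 : a1 = a2 := sing_right_unique hs1 hs2
    subst ha12
    have hb12 : b1 = b2 := hf.2.2.2.1 _ _ _ hf1 hf2
    subst hb12
    exact sing_left_unique h ht1 ht2
  · intro sa sa' sb h1 h2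
    obtain ⟨a1, b1, s1, t1, hf1, hs1, ht1, he1⟩ := (hc _).mp h1
    obtain ⟨a2, b2, s2, t2, hf2, hs2, ht2, he2⟩ := (hc _).mp h2
    obtain ⟨e1, e2⟩ := pair_inj h he1
    obtain ⟨e3, e4⟩ := pair_inj h he2
    subst e1; subst e2; subst e3; subst e4
    have hb12 : b1 = b2 := sing_right_unique ht1 ht2
    subst hb12
    have ha12 : a1 = a2 := hf.2.2.2.2.1 _ _ _ hf1 hf2
    subst ha12
    exact sing_left_unique h hs1 hs2
  · intro sb hsb
    obtain ⟨b, hbZ, hsb'⟩ := (hW.2 sb).mp hsb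
    obtain ⟨a, ha⟩ := hf.2.2.2.2.2 b hbZ
    obtain ⟨sa, hsa⟩ := ex_sing' h a
    exact ⟨sa, (hc _).mpr ⟨a, b, sa, sb, ha, hsa, hsb', rfl⟩⟩

lemma ex_iota' (h : M ⊨ NFUmAC) (X : M) : ∃ Y : M, isIotaImageOf Y X := by
  obtain ⟨Y, hY, hc⟩ := ex_iota h X
  exact ⟨Y, hY, hc⟩

end BijSem
end NFUweak

namespace NFUweak
open FirstOrder Language
set_option linter.unusedSectionVars false

section Nats
variable {M : Type} [LNFU.Structure M] [Nonempty M]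

lemma nat_sset (h : M ⊨ NFUmAC) {n : M} (hn : isNat n) : sset n := by
  obtain ⟨V, hV, hc⟩ := ex_allsets h
  have hind : isInductiveSet V :=
    ⟨hV, fun z hz => (hc z).mpr hz.1, fun a b _ hb => (hc b).mpr hb.1⟩
  exact (hc n).mp (hn V hind)

/-- Every natural number is a "nice" set: its members are pairwise equipollent
and it is closed under equipollence. -/
lemma nat_nice (h : M ⊨ NFUmAC) {n : M} (hn : isNat n) :
    (∀ y y', smem y n → smem y' n → ∃ f, BIJ f y y') ∧
      (∀ y z, smem y n → (∃ f, BIJ f z y) → smem z n) := by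
  obtain ⟨P, hP, hc⟩ := ex_P1 h
  have hind : isInductiveSet P := by
    refine ⟨hP, ?_, ?_⟩
    · -- base case : the zero cardinal
      intro z hz
      refine (hc z).mpr ⟨hz.1, ?_, ?_⟩
      · intro y y' hy hy'
        have hyZ := (hz.2 y).mp hy
        have hy'Z := (hz.2 y').mp hy'
        obtain ⟨e, he, hce⟩ := ex_empty h
        exact ⟨e, he, fun p hp => absurd hp (hce p),
          fun a ha => absurd ha (hyZ a),
          fun a b b' h1 _ => absurd h1 (hce _),
          fun a a' b h1 _ => absurd h1 (hce _),
          fun b hb => absurd hb (hy'Z b)⟩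
      · intro y z' hy hez
        obtain ⟨f, hf⟩ := hez
        refine (hz.2 z').mpr (fun w hw => ?_)
        obtain ⟨b, hb⟩ := hf.2.2.1 w hw
        exact ((hz.2 y).mp hy) b (hf.dom_mem h hb).2
    · -- successor case
      intro a b haP hb
      have hq := (hc a).mp haP
      refine (hc b).mpr ⟨hb.1, ?_, ?_⟩
      · -- pairwise
        intro y y' hy hy'
        obtain ⟨z, hzy, d, hd, hdc, hda⟩ := (hb.2 y).mp hy
        obtain ⟨z', hzy', d', hd', hdc', hda'⟩ := (hb.2 y').mp hy'
        obtain ⟨f, hf⟩ := hq.2.1 d d' hda hda'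
        obtain ⟨sp, hsp, hcsp⟩ := ex_sing h (spair z z')
        obtain ⟨F, hF, hcF⟩ := ex_union h f sp
        refine ⟨F, hF, ?_, ?_, ?_, ?_, ?_⟩
        · intro p hp
          rcases (hcF p).mp hp with hp | hp
          · obtain ⟨a0, b0, rfl, ha0, hb0⟩ := hf.2.1 p hp
            exact ⟨a0, b0, rfl, ((hdc a0).mp ha0).1, ((hdc' b0).mp hb0).1⟩
          · rw [(hcsp p).mp hp]
            exact ⟨z, z', rfl, hzy, hzy'⟩
        · intro a0 ha0
          by_cases ha0z : a0 = z
          · exact ⟨z', (hcF _).mpr (Or.inr ((hcsp _).mpr (by rw [ha0z])))⟩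
          · obtain ⟨b0, hb0⟩ := hf.2.2.1 a0 ((hdc a0).mpr ⟨ha0, ha0z⟩)
            exact ⟨b0, (hcF _).mpr (Or.inl hb0)⟩
        · intro a0 b0 b0' h1 h2
          rcases (hcF _).mp h1 with h1 | h1 <;> rcases (hcF _).mp h2 with h2 | h2
          · exact hf.2.2.2.1 _ _ _ h1 h2
          · obtain ⟨e1, e2⟩ := pair_inj h ((hcsp _).mp h2)
            exact absurd e1 ((hdc a0).mp (hf.dom_mem h h1).1).2
          · obtain ⟨e1, e2⟩ := pair_inj h ((hcsp _).mp h1)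
            exact absurd e1 ((hdc a0).mp (hf.dom_mem h h2).1).2
          · obtain ⟨e1, e2⟩ := pair_inj h ((hcsp _).mp h1)
            obtain ⟨e1', e2'⟩ := pair_inj h ((hcsp _).mp h2)
            exact e2.trans e2'.symm
        · intro a0 a0' b0 h1 h2
          rcases (hcF _).mp h1 with h1 | h1 <;> rcases (hcF _).mp h2 with h2 | h2
          · exact hf.2.2.2.2.1 _ _ _ h1 h2
          · obtain ⟨e1, e2⟩ := pair_inj h ((hcsp _).mp h2)
            exact absurd e2 ((hdc' b0).mp (hf.dom_mem h h1).2).2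
          · obtain ⟨e1, e2⟩ := pair_inj h ((hcsp _).mp h1)
            exact absurd e2 ((hdc' b0).mp (hf.dom_mem h h2).2).2
          · obtain ⟨e1, e2⟩ := pair_inj h ((hcsp _).mp h1)
            obtain ⟨e1', e2'⟩ := pair_inj h ((hcsp _).mp h2)
            exact e1.trans e1'.symm
        · intro b0 hb0
          by_cases hb0z : b0 = z'
          · exact ⟨z, (hcF _).mpr (Or.inr ((hcsp _).mpr (by rw [hb0z])))⟩
          · obtain ⟨a0, ha0⟩ := hf.2.2.2.2.2 b0 ((hdc' b0).mpr ⟨hb0, hb0z⟩)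
            exact ⟨a0, (hcF _).mpr (Or.inl ha0)⟩
      · -- closure
        intro y y' hy hey
        obtain ⟨f, hf⟩ := hey
        obtain ⟨z, hzy, d, hd, hdc, hda⟩ := (hb.2 y).mp hy
        obtain ⟨z', hz'⟩ := hf.2.2.2.2.2 z hzy
        have hz'y' := (hf.dom_mem h hz').1
        obtain ⟨d', hd', hcd'⟩ := ex_diff h y' z'
        have hT : ∀ w, smem w d ↔ (smem w y ∧ smem w d) :=
          fun w => ⟨fun hw => ⟨((hdc w).mp hw).1, hw⟩, fun q => q.2⟩
        obtain ⟨P', k, _, hcP', hk⟩ := bij_restr h hf hT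
        have hPd : ∀ w, smem w P' ↔ smem w d' := by
          intro w
          rw [hcP' w, hcd' w]
          constructor
          · rintro ⟨b0, hwb0, hb0⟩
            refine ⟨(hf.dom_mem h hwb0).1, fun hwz => ?_⟩
            subst hwz
            exact ((hdc b0).mp hb0).2 (hf.2.2.2.1 _ _ _ hwb0 hz')
          · rintro ⟨hwy', hwz'⟩
            obtain ⟨b0, hb0⟩ := hf.2.2.1 w hwy'
            have hb0y := (hf.dom_mem h hb0).2
            have hb0z : b0 ≠ z := fun he =>
              hwz' (hf.2.2.2.2.1 w z' b0 hb0 (by rw [he]; exact hz'))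
            exact ⟨b0, hb0, (hdc b0).mpr ⟨hb0y, hb0z⟩⟩
        have hkd : BIJ k d' d := hk.transport_dom hPd
        refine (hb.2 y').mpr ⟨z', hz'y', d', hd', hcd', ?_⟩
        exact hq.2.2 d d' hda ⟨k, hkd⟩
  obtain ⟨_, h1, h2⟩ := (hc n).mp (hn P hind)
  exact ⟨h1, h2⟩

/-- No finite set is equipollent with a proper subset (internal pigeonhole). -/
lemma nat_pigeon (h : M ⊨ NFUmAC) {n : M} (hn : isNat n) :
    ∀ u C f, smem u n → sset C → (∀ w, smem w C → smem w u) →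
      BIJ f u C → ∀ w, smem w u → smem w C := by
  obtain ⟨P, hP, hc⟩ := ex_P2 h
  have hind : isInductiveSet P := by
    refine ⟨hP, ?_, ?_⟩
    · intro z hz
      refine (hc z).mpr ⟨hz.1, ?_⟩
      intro u C f huz _ _ _ w hwu
      exact absurd hwu (((hz.2 u).mp huz) w)
    · intro a b haP hb
      have hq := (hc a).mp haP
      refine (hc b).mpr ⟨hb.1, ?_⟩
      intro u C f huB hC hCu hf w0 hw0u
      by_contra hw0C
      obtain ⟨z, hzu, d, hd, hdc, hda⟩ := (hb.2 u).mp huB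
      obtain ⟨v, hv⟩ := hf.2.2.1 z hzu
      have hvC : smem v C := (hf.dom_mem h hv).2
      by_cases hzC : smem z C
      · -- z ∈ C
        obtain ⟨w1, hw1⟩ := hf.2.2.2.2.2 z hzC
        have hw1u := (hf.dom_mem h hw1).1
        obtain ⟨Cz, hCz, hcCz⟩ := ex_diff h C z
        have hCzd : ∀ w, smem w Cz → smem w d := fun w hw => by
          obtain ⟨hwC, hwz⟩ := (hcCz w).mp hw
          exact (hdc w).mpr ⟨hCu w hwC, hwz⟩
        have hw0z : w0 ≠ z := fun he => hw0C (he ▸ hzC)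
        have hw0d : smem w0 d := (hdc w0).mpr ⟨hw0u, hw0z⟩
        by_cases hw1z : w1 = z
        · -- f(z) = z
          have hvz : v = z := hf.2.2.2.1 z v z hv (hw1z ▸ hw1)
          rw [hvz] at hv
          have hT : ∀ b0, smem b0 Cz ↔ (smem b0 C ∧ smem b0 Cz) :=
            fun b0 => ⟨fun hx => ⟨((hcCz b0).mp hx).1, hx⟩, fun q => q.2⟩
          obtain ⟨P', k, _, hcP', hk⟩ := bij_restr h hf hT
          have hPd : ∀ w, smem w P' ↔ smem w d := by
            intro w
            rw [hcP' w, hdc w]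
            constructor
            · rintro ⟨b0, hwb0, hb0⟩
              refine ⟨(hf.dom_mem h hwb0).1, fun hwz => ?_⟩
              subst hwz
              exact ((hcCz b0).mp hb0).2 (hf.2.2.2.1 _ _ _ hwb0 hv)
            · rintro ⟨hwu, hwz⟩
              obtain ⟨b0, hb0⟩ := hf.2.2.1 w hwu
              have hb0C := (hf.dom_mem h hb0).2
              have hb0z : b0 ≠ z := fun he =>
                hwz (hf.2.2.2.2.1 w z b0 hb0 (by rw [he]; exact hv))
              exact ⟨b0, hb0, (hcCz b0).mpr ⟨hb0C, hb0z⟩⟩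
          have hkd : BIJ k d Cz := hk.transport_dom hPd
          have hsub := hq.2 d Cz k hda hCz hCzd hkd
          exact hw0C ((hcCz w0).mp (hsub w0 hw0d)).1
        · -- w1 ≠ z : swap construction
          have hw1d : smem w1 d := (hdc w1).mpr ⟨hw1u, hw1z⟩
          have hvz : v ≠ z := fun he =>
            hw1z (hf.2.2.2.2.1 w1 z z hw1 (by rw [← he] at hw1 ⊢; exact he ▸ hv))
          obtain ⟨f1, hf1, hcf1⟩ := ex_diff h f (spair z v)
          obtain ⟨f2, hf2, hcf2⟩ := ex_diff h f1 (spair w1 z)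
          obtain ⟨sp, hsp, hcsp⟩ := ex_sing h (spair w1 v)
          obtain ⟨g, hg, hcg⟩ := ex_union h f2 sp
          have hmemg : ∀ p, smem p g ↔
              ((smem p f ∧ p ≠ spair z v ∧ p ≠ spair w1 z) ∨ p = spair w1 v) := by
            intro p
            rw [hcg p, hcf2 p, hcf1 p, hcsp p]
            tauto
          have hgd : BIJ g d Cz := by
            refine ⟨hg, ?_, ?_, ?_, ?_, ?_⟩
            · intro p hp
              rcases (hmemg p).mp hp with ⟨hpf, hne1, hne2⟩ | rfl
              · obtain ⟨a0, b0, rfl, ha0u, hb0C⟩ := hf.2.1 p hpf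
                have ha0z : a0 ≠ z := by
                  intro he
                  subst he
                  exact hne1 (by rw [hf.2.2.2.1 _ _ _ hpf hv])
                have hb0z : b0 ≠ z := by
                  intro he
                  subst he
                  exact hne2 (by rw [hf.2.2.2.2.1 _ _ _ hpf hw1])
                exact ⟨a0, b0, rfl, (hdc a0).mpr ⟨ha0u, ha0z⟩,
                  (hcCz b0).mpr ⟨hb0C, hb0z⟩⟩
              · exact ⟨w1, v, rfl, hw1d, (hcCz v).mpr ⟨hvC, hvz⟩⟩
            · intro a0 ha0d
              obtain ⟨ha0u, ha0z⟩ := (hdc a0).mp ha0d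
              by_cases ha0w1 : a0 = w1
              · exact ⟨v, (hmemg _).mpr (Or.inr (by rw [ha0w1]))⟩
              · obtain ⟨b0, hb0⟩ := hf.2.2.1 a0 ha0u
                refine ⟨b0, (hmemg _).mpr (Or.inl ⟨hb0, ?_, ?_⟩)⟩
                · intro he
                  exact ha0z (pair_inj h he).1
                · intro he
                  exact ha0w1 (pair_inj h he).1
            · intro a0 b0 b0' h1 h2
              rcases (hmemg _).mp h1 with ⟨h1f, h1e1, h1e2⟩ | h1e <;>
                rcases (hmemg _).mp h2 with ⟨h2f, h2e1, h2e2⟩ | h2e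
              · exact hf.2.2.2.1 _ _ _ h1f h2f
              · obtain ⟨e1, e2⟩ := pair_inj h h2e
                subst e1
                exact absurd (by rw [hf.2.2.2.1 _ _ _ h1f hw1]) h1e2
              · obtain ⟨e1, e2⟩ := pair_inj h h1e
                subst e1
                exact absurd (by rw [hf.2.2.2.1 _ _ _ h2f hw1]) h2e2
              · obtain ⟨e1, e2⟩ := pair_inj h h1e
                obtain ⟨e1', e2'⟩ := pair_inj h h2e
                exact e2.trans e2'.symm
            · intro a0 a0' b0 h1 h2
              rcases (hmemg _).mp h1 with ⟨h1f, h1e1, h1e2⟩ | h1e <;>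
                rcases (hmemg _).mp h2 with ⟨h2f, h2e1, h2e2⟩ | h2e
              · exact hf.2.2.2.2.1 _ _ _ h1f h2f
              · obtain ⟨e1, e2⟩ := pair_inj h h2e
                subst e2
                exact absurd (by rw [hf.2.2.2.2.1 _ _ _ h1f hv]) h1e1
              · obtain ⟨e1, e2⟩ := pair_inj h h1e
                subst e2
                exact absurd (by rw [hf.2.2.2.2.1 _ _ _ h2f hv]) h2e1
              · obtain ⟨e1, e2⟩ := pair_inj h h1e
                obtain ⟨e1', e2'⟩ := pair_inj h h2e
                exact e1.trans e1'.symm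
            · intro b0 hb0
              obtain ⟨hb0C, hb0z⟩ := (hcCz b0).mp hb0
              by_cases hb0v : b0 = v
              · exact ⟨w1, (hmemg _).mpr (Or.inr (by rw [hb0v]))⟩
              · obtain ⟨a0, ha0⟩ := hf.2.2.2.2.2 b0 hb0C
                refine ⟨a0, (hmemg _).mpr (Or.inl ⟨ha0, ?_, ?_⟩)⟩
                · intro he
                  exact hb0v (pair_inj h he).2
                · intro he
                  exact hb0z (pair_inj h he).2
          have hsub := hq.2 d Cz g hda hCz hCzd hgd
          exact hw0C ((hcCz w0).mp (hsub w0 hw0d)).1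
      · -- z ∉ C
        obtain ⟨Cv, hCv, hcCv⟩ := ex_diff h C v
        have hT : ∀ b0, smem b0 Cv ↔ (smem b0 C ∧ smem b0 Cv) :=
          fun b0 => ⟨fun hx => ⟨((hcCv b0).mp hx).1, hx⟩, fun q => q.2⟩
        obtain ⟨P', k, _, hcP', hk⟩ := bij_restr h hf hT
        have hPd : ∀ w, smem w P' ↔ smem w d := by
          intro w
          rw [hcP' w, hdc w]
          constructor
          · rintro ⟨b0, hwb0, hb0⟩
            refine ⟨(hf.dom_mem h hwb0).1, fun hwz => ?_⟩
            subst hwz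
            exact ((hcCv b0).mp hb0).2 (hf.2.2.2.1 _ _ _ hwb0 hv)
          · rintro ⟨hwu, hwz⟩
            obtain ⟨b0, hb0⟩ := hf.2.2.1 w hwu
            have hb0C := (hf.dom_mem h hb0).2
            have hb0v : b0 ≠ v := fun he =>
              hwz (hf.2.2.2.2.1 w z b0 hb0 (by rw [he]; exact hv))
            exact ⟨b0, hb0, (hcCv b0).mpr ⟨hb0C, hb0v⟩⟩
        have hkd : BIJ k d Cv := hk.transport_dom hPd
        have hCvd : ∀ w, smem w Cv → smem w d := fun w hw => by
          obtain ⟨hwC, hwv⟩ := (hcCv w).mp hw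
          exact (hdc w).mpr ⟨hCu w hwC, fun hwz => hzC (hwz ▸ hwC)⟩
        have hsub := hq.2 d Cv k hda hCv hCvd hkd
        have hvu : smem v u := hCu v hvC
        have hvz : v ≠ z := fun he => hzC (he ▸ hvC)
        have hvd : smem v d := (hdc v).mpr ⟨hvu, hvz⟩
        exact ((hcCv v).mp (hsub v hvd)).2 rfl
  obtain ⟨_, h2⟩ := (hc n).mp (hn P hind)
  exact h2

end Nats
end NFUweak

namespace NFUweak
open FirstOrder Language
set_option linter.unusedSectionVars false

section Main
variable {M : Type} [LNFU.Structure M] [Nonempty M]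

lemma isTOf_of_BIJ (h : M ⊨ NFUmAC) {m x Yx t : M} (hxm : smem x m)
    (hYx : isIotaImageOf Yx x) (ht : sset t)
    (hct : ∀ z, smem z t ↔ ∃ f, BIJ f z Yx) : isTOf t m := by
  refine ⟨x, Yx, hxm, hYx, ht, fun y => (hct y).trans ?_⟩
  exact exists_congr fun f => BIJ_iff

theorem main_aux (M : Type) [LNFU.Structure M] [Nonempty M] (h : M ⊨ NFUmAC)
    (hAx : axCountGeqHolds M) (n m : M) (hn : isNat n) (hm : isNat m)
    (hTn : isTOf n n) (hle : natLe m n) : isTOf m m := by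
  classical
  obtain ⟨X0, Y0, hX0n, hY0, hsn, hcn⟩ := hTn
  have hn_char : ∀ y, smem y n ↔ ∃ f, BIJ f y Y0 :=
    fun y => (hcn y).trans (exists_congr fun f => BIJ_iff.symm)
  obtain ⟨k', hk'nat, x, y, u, hxm, hyk, hdisj, hu, huc, hun⟩ := hle
  -- T(m) =: t, built from x ∈ m
  obtain ⟨Yx, hYx⟩ := ex_iota' h x
  obtain ⟨t, ht, hct⟩ := ex_card h Yx
  have hTt : isTOf t m := isTOf_of_BIJ h hxm hYx ht hct
  obtain ⟨k1, hk1nat, x1, y1, u1, hx1t, hy1k1, hdisj1, hu1, hu1c, hu1m⟩ :=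
    hAx m hm t hTt
  -- T(k') =: t2, built from y ∈ k'
  obtain ⟨Yy, hYy⟩ := ex_iota' h y
  obtain ⟨t2, ht2, hct2⟩ := ex_card h Yy
  have hTt2 : isTOf t2 k' := isTOf_of_BIJ h hyk hYy ht2 hct2
  obtain ⟨k2, hk2nat, x2, y2, u2, hx2t2, hy2k2, hdisj2, hu2, hu2c, hu2k⟩ :=
    hAx k' hk'nat t2 hTt2
  have hniceM := nat_nice h hm
  have hniceK := nat_nice h hk'nat
  -- bijections x ≈ u1 and y ≈ u2
  obtain ⟨fxu1, hfxu1⟩ := hniceM.1 x u1 hxm hu1m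
  obtain ⟨fyu2, hfyu2⟩ := hniceK.1 y u2 hyk hu2k
  -- A1 := fxu1⁻¹[x1] with a bijection onto x1
  have hTx1 : ∀ b, smem b x1 ↔ (smem b u1 ∧ smem b x1) :=
    fun b => ⟨fun hb => ⟨(hu1c b).mpr (Or.inl hb), hb⟩, fun q => q.2⟩
  obtain ⟨A1, kA1, hA1s, hA1c, hkA1⟩ := bij_restr h hfxu1 hTx1
  have hTx2 : ∀ b, smem b x2 ↔ (smem b u2 ∧ smem b x2) :=
    fun b => ⟨fun hb => ⟨(hu2c b).mpr (Or.inl hb), hb⟩, fun q => q.2⟩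
  obtain ⟨A2, kA2, hA2s, hA2c, hkA2⟩ := bij_restr h hfyu2 hTx2
  -- A1 ⊆ x, A2 ⊆ y
  have hA1x : ∀ a, smem a A1 → smem a x := by
    intro a ha
    obtain ⟨b, hab, _⟩ := (hA1c a).mp ha
    exact (hfxu1.dom_mem h hab).1
  have hA2y : ∀ a, smem a A2 → smem a y := by
    intro a ha
    obtain ⟨b, hab, _⟩ := (hA2c a).mp ha
    exact (hfyu2.dom_mem h hab).1
  -- bijections A1 → Yx and A2 → Yy  (via x1 ∈ t, x2 ∈ t2)
  obtain ⟨fx1, hfx1⟩ := (hct x1).mp hx1t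
  obtain ⟨fx2, hfx2⟩ := (hct2 x2).mp hx2t2
  obtain ⟨c1, hc1⟩ := bij_comp h hkA1 hfx1   -- A1 → Yx
  obtain ⟨c2, hc2⟩ := bij_comp h hkA2 hfx2   -- A2 → Yy
  obtain ⟨ic1, hic1⟩ := bij_inv h hc1        -- Yx → A1
  obtain ⟨ic2, hic2⟩ := bij_inv h hc2        -- Yy → A2
  -- YU := Yx ∪ Yy, C := A1 ∪ A2
  obtain ⟨YU, hYU, hYUc⟩ := ex_union h Yx Yy
  obtain ⟨C, hCs, hCc⟩ := ex_union h A1 A2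
  have hdisjY : ∀ p, ¬ (smem p Yx ∧ smem p Yy) := by
    rintro p ⟨h1, h2⟩
    obtain ⟨a, hax, hsa⟩ := (hYx.2 p).mp h1
    obtain ⟨b, hby, hsb⟩ := (hYy.2 p).mp h2
    exact hdisj a ⟨hax, (sing_right_unique hsa hsb) ▸ hby⟩
  have hdisjA : ∀ z, ¬ (smem z A1 ∧ smem z A2) :=
    fun z hz => hdisj z ⟨hA1x z hz.1, hA2y z hz.2⟩
  obtain ⟨cU, hcU⟩ := bij_union h hic1 hic2 hdisjY hdisjA hYUc hCc  -- YU → C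
  -- u ≈ Y0 and X0 ≈ Y0, hence u ≈ X0
  obtain ⟨e0, he0⟩ := (hn_char u).mp hun
  obtain ⟨e1, he1⟩ := (hn_char X0).mp hX0n
  obtain ⟨ie1, hie1⟩ := bij_inv h he1
  obtain ⟨e2, he2⟩ := bij_comp h he0 hie1    -- u → X0
  -- YU is the iota image of u
  have hYUiota : isIotaImageOf YU u := by
    refine ⟨hYU, fun z => (hYUc z).trans ?_⟩
    constructor
    · rintro (hz | hz)
      · obtain ⟨a, hax, hsa⟩ := (hYx.2 z).mp hz
        exact ⟨a, (huc a).mpr (Or.inl hax), hsa⟩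
      · obtain ⟨a, hay, hsa⟩ := (hYy.2 z).mp hz
        exact ⟨a, (huc a).mpr (Or.inr hay), hsa⟩
    · rintro ⟨a, hau, hsa⟩
      rcases (huc a).mp hau with ha | ha
      · exact Or.inl ((hYx.2 z).mpr ⟨a, ha, hsa⟩)
      · exact Or.inr ((hYy.2 z).mpr ⟨a, ha, hsa⟩)
  obtain ⟨E, hE⟩ := bij_lift h he2 hYUiota hY0    -- YU → Y0
  obtain ⟨iE, hiE⟩ := bij_inv h hE                -- Y0 → YU
  obtain ⟨G0, hG0⟩ := bij_comp h he0 hiE          -- u → YU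
  obtain ⟨G, hG⟩ := bij_comp h hG0 hcU            -- u → C
  -- C ⊆ u
  have hCu : ∀ w, smem w C → smem w u := by
    intro w hw
    rcases (hCc w).mp hw with hw | hw
    · exact (huc w).mpr (Or.inl (hA1x w hw))
    · exact (huc w).mpr (Or.inr (hA2y w hw))
  -- pigeonhole: u ⊆ C
  have husub := nat_pigeon h hn u C G hun hCs hCu hG
  -- y1 is memberless
  have hy1empty : ∀ b, ¬ smem b y1 := by
    intro b hb
    have hbu1 : smem b u1 := (hu1c b).mpr (Or.inr hb)
    obtain ⟨a, hab⟩ := hfxu1.2.2.2.2.2 b hbu1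
    have hax : smem a x := (hfxu1.dom_mem h hab).1
    have haC : smem a C := husub a ((huc a).mpr (Or.inl hax))
    rcases (hCc a).mp haC with ha | ha
    · obtain ⟨b', hab', hb'x1⟩ := (hA1c a).mp ha
      have : b' = b := hfxu1.2.2.2.1 a b' b hab' hab
      exact hdisj1 b ⟨this ▸ hb'x1, hb⟩
    · exact hdisj a ⟨hax, hA2y a ha⟩
  -- u1 and x1 have the same members
  have hux1 : ∀ w, smem w u1 ↔ smem w x1 := by
    intro w
    rw [hu1c w]
    exact ⟨fun q => q.resolve_right (hy1empty w), Or.inl⟩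
  -- u1 ∈ t
  have hu1t : smem u1 t :=
    (hct u1).mpr ⟨fx1, hfx1.transport_dom (fun z => (hux1 z).symm)⟩
  obtain ⟨fu1, hfu1⟩ := (hct u1).mp hu1t     -- u1 → Yx
  obtain ⟨ifu1, hifu1⟩ := bij_inv h hfu1     -- Yx → u1
  -- t = m
  have htm : t = m := by
    refine mext h ht (nat_sset h hm) (fun z => ?_)
    constructor
    · intro hz
      obtain ⟨fz, hfz⟩ := (hct z).mp hz
      obtain ⟨g, hg⟩ := bij_comp h hfz hifu1   -- z → u1
      exact hniceM.2 u1 z hu1m ⟨g, hg⟩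
    · intro hz
      obtain ⟨g, hg⟩ := hniceM.1 z u1 hz hu1m
      obtain ⟨g2, hg2⟩ := bij_comp h hg hfu1
      exact (hct z).mpr ⟨g2, hg2⟩
  exact htm ▸ hTt

end Main

end NFUweak
namespace NFUweak

theorem stmt8 :
    ∀ (M : Type) [LNFU.Structure M] [Nonempty M], M ⊨ NFUmAC → axCountGeqHolds M →
      ∀ n m : M, isNat n → isNat m → isTOf n n → natLe m n → isTOf m m := by
  intro M _ _ h hAx n m hn hm hTn hle
  exact main_aux M h hAx n m hn hm hTn hle

end NFUweak
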